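/- arXiv:2008.09494 — 9 statements merged into one kernel-verified Lean document; each statement's English description precedes it below -/
import Mathlib

section
/- Let H be a complex Hilbert space and let T ∈ B(H) be a conditionally positive definite operator that is invertible in B(H) (i.e., T has a bounded two-sided inverse). Then its inverse T⁻¹ is also conditionally positive definite. -/
open MeasureTheory Filter Topology ContinuousLinearMap
open scoped ComplexOrder

noncomputable section

/-- A real sequence `γ` is *conditionally positive definite* (CPD) if
`∑_{i,j=0}^k γ_{i+j} λ_i conj(λ_j) ≥ 0` for all finite sequences `λ_0, …, λ_k` of complex
numbers with `∑_{i=0}^k λ_i = 0`. -/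
def IsCPDSeq (γ : ℕ → ℝ) : Prop :=
  ∀ (k : ℕ) (l : ℕ → ℂ), ∑ i ∈ Finset.range (k + 1), l i = 0 →
    0 ≤ ∑ i ∈ Finset.range (k + 1), ∑ j ∈ Finset.range (k + 1),
        (γ (i + j) : ℂ) * l i * (starRingEnd ℂ) (l j)

/-- An operator `T ∈ B(H)` is *conditionally positive definite* (CPD) if for every `h ∈ H` the
sequence `{‖Tⁿh‖²}ₙ` is CPD. -/
def IsCPDOp {H : Type*} [NormedAddCommGroup H] [InnerProductSpace ℂ H] [CompleteSpace H]
    (T : H →L[ℂ] H) : Prop :=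
  ∀ h : H, IsCPDSeq fun n => ‖(T ^ n) h‖ ^ 2

private lemma pow_mul_pow_eq_one_aux {H : Type*} [NormedAddCommGroup H]
    [InnerProductSpace ℂ H] [CompleteSpace H] (T S : H →L[ℂ] H) (hTS : T * S = 1) :
    ∀ m : ℕ, T ^ m * S ^ m = 1 := by
  intro m
  induction m with
  | zero => simp
  | succ n ih =>
    rw [pow_succ, pow_succ', mul_assoc, ← mul_assoc T S, hTS, one_mul, ih]

private lemma apply_pow_aux {H : Type*} [NormedAddCommGroup H]
    [InnerProductSpace ℂ H] [CompleteSpace H] (T S : H →L[ℂ] H) (hTS : T * S = 1)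
    (m d : ℕ) (h : H) : (T ^ m) ((S ^ (m + d)) h) = (S ^ d) h := by
  have key : T ^ m * S ^ (m + d) = S ^ d := by
    rw [pow_add, ← mul_assoc, pow_mul_pow_eq_one_aux T S hTS m, one_mul]
  calc (T ^ m) ((S ^ (m + d)) h) = (T ^ m * S ^ (m + d)) h := rfl
    _ = (S ^ d) h := by rw [key]

/-- If `T ∈ B(H)` is a CPD operator which is invertible in `B(H)`, then its inverse is CPD. -/
theorem inverse_of_cpd_isCPD {H : Type*} [NormedAddCommGroup H] [InnerProductSpace ℂ H]
    [CompleteSpace H] (T S : H →L[ℂ] H) (hCPD : IsCPDOp T)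
    (hTS : T * S = 1) (hST : S * T = 1) :
    IsCPDOp S := by
  intro h k l hl
  -- reflect a single sum
  have h1 : ∀ G : ℕ → ℂ,
      ∑ i ∈ Finset.range (k + 1), G (k - i) = ∑ i ∈ Finset.range (k + 1), G i := by
    intro G
    have := Finset.sum_range_reflect G (k + 1)
    simpa using this
  have hl' : ∑ i ∈ Finset.range (k + 1), l (k - i) = 0 := by
    rw [h1 l]; exact hl
  have key := hCPD ((S ^ (2 * k)) h) k (fun i => l (k - i)) hl'
  set F : ℕ → ℕ → ℂ := fun a b =>
    ((‖(S ^ (a + b)) h‖ ^ 2 : ℝ) : ℂ) * l a * (starRingEnd ℂ) (l b) with hF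
  have hkey : ∑ i ∈ Finset.range (k + 1), ∑ j ∈ Finset.range (k + 1),
      ((‖(T ^ (i + j)) ((S ^ (2 * k)) h)‖ ^ 2 : ℝ) : ℂ) * l (k - i)
        * (starRingEnd ℂ) (l (k - j))
      = ∑ i ∈ Finset.range (k + 1), ∑ j ∈ Finset.range (k + 1), F (k - i) (k - j) := by
    refine Finset.sum_congr rfl fun i hi => Finset.sum_congr rfl fun j hj => ?_
    have hik : i ≤ k := Nat.lt_succ_iff.mp (Finset.mem_range.mp hi)
    have hjk : j ≤ k := Nat.lt_succ_iff.mp (Finset.mem_range.mp hj)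
    have h2k : 2 * k = (i + j) + ((k - i) + (k - j)) := by omega
    have := apply_pow_aux T S hTS (i + j) ((k - i) + (k - j)) h
    rw [hF]
    simp only
    rw [h2k, this]
  have hrefl : ∑ i ∈ Finset.range (k + 1), ∑ j ∈ Finset.range (k + 1), F (k - i) (k - j)
      = ∑ i ∈ Finset.range (k + 1), ∑ j ∈ Finset.range (k + 1), F i j := by
    calc ∑ i ∈ Finset.range (k + 1), ∑ j ∈ Finset.range (k + 1), F (k - i) (k - j)
        = ∑ i ∈ Finset.range (k + 1), ∑ j ∈ Finset.range (k + 1), F i (k - j) :=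
          h1 (fun a => ∑ j ∈ Finset.range (k + 1), F a (k - j))
      _ = ∑ i ∈ Finset.range (k + 1), ∑ j ∈ Finset.range (k + 1), F i j :=
          Finset.sum_congr rfl fun i _ => h1 (fun b => F i b)
    
  calc (0 : ℂ) ≤ _ := key
    _ = _ := by rw [hkey, hrefl]

end
end

section
/- Suppose a, b, c ∈ ℂ and μ is a complex Borel measure on ℝ such that μ({1}) = 0, the total variation measure |μ| is compactly supported, and a + b·n + c·n² + ∫_ℝ Q_n(x) dμ(x) = 0 for every n ∈ ℤ₊. Then a = b = c = 0 and μ = 0. -/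
open MeasureTheory Filter Topology

noncomputable section

/-- The polynomial `Q_n`: `Q_n(x) = 0` for `n = 0, 1` and
`Q_n(x) = ∑_{j=0}^{n-2} (n - j - 1) x^j` for `n ≥ 2`. -/
def Qpoly (n : ℕ) (x : ℝ) : ℝ :=
  ∑ j ∈ Finset.range (n - 1), ((n : ℝ) - (j : ℝ) - 1) * x ^ j

/-- The integral of a real function against a (real) signed measure, via the Jordan
decomposition. -/
def signedIntegral (s : SignedMeasure ℝ) (f : ℝ → ℝ) : ℝ :=
  (∫ x, f x ∂s.toJordanDecomposition.posPart) - ∫ x, f x ∂s.toJordanDecomposition.negPart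

/-- The integral of a real function against a complex Borel measure. -/
def complexIntegral (μ : ComplexMeasure ℝ) (f : ℝ → ℝ) : ℂ :=
  (signedIntegral (ComplexMeasure.re μ) f : ℂ) +
    (signedIntegral (ComplexMeasure.im μ) f : ℂ) * Complex.I

/-!
Taking second differences in `n` removes `a + b n` and, since
`Q_{n+2} - 2 Q_{n+1} + Q_n = x ^ n`, turns the hypothesis into `∫ x ^ n dμ = -2c` for every `n`:
`μ` has the moments of `-2c δ₁`. Finite measures carried by a compact interval are determined by
their moments (Weierstrass approximation), so `μ = -2c δ₁`; then `μ {1} = 0` forces `c = 0` and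
`μ = 0`, and `a + b n = 0` for all `n` gives `a = b = 0`. For a signed measure `p - q` whose
moments all equal `t`, the moment argument is applied to the positive measures `p + t⁻ δ₁` and
`q + t⁺ δ₁`.
-/

open Set Polynomial
open scoped NNReal ENNReal

theorem Qpoly_succ (n : ℕ) (x : ℝ) :
    Qpoly (n + 1) x = Qpoly n x + ∑ j ∈ Finset.range n, x ^ j := by
  cases n with
  | zero => simp [Qpoly]
  | succ m =>
    have hterm : ∀ j ∈ Finset.range m,
        ((↑(m + 1 + 1) : ℝ) - j - 1) * x ^ j = ((↑(m + 1) : ℝ) - j - 1) * x ^ j + x ^ j :=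
      fun j _ => by push_cast; ring
    simp only [Qpoly, Nat.add_sub_cancel, Finset.sum_range_succ, Finset.sum_congr rfl hterm,
      Finset.sum_add_distrib]
    push_cast
    ring

theorem Qpoly_add_two_add (n : ℕ) (x : ℝ) :
    Qpoly (n + 2) x + Qpoly n x = 2 * Qpoly (n + 1) x + x ^ n := by
  rw [Qpoly_succ (n + 1), Qpoly_succ n, Finset.sum_range_succ]
  ring

theorem continuous_Qpoly (n : ℕ) : Continuous (Qpoly n) :=
  continuous_finsetSum _ fun _ _ => by fun_prop

theorem Continuous.integrable_of_ae_mem_compact {X E : Type*} [TopologicalSpace X] [T2Space X]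
    [MeasurableSpace X] [OpensMeasurableSpace X] [NormedAddCommGroup E] {μ : Measure X}
    [IsFiniteMeasure μ] {K : Set X} {f : X → E} (hf : Continuous f) (hK : IsCompact K)
    (hμ : ∀ᵐ x ∂μ, x ∈ K) : Integrable f μ := by
  rw [← Measure.restrict_eq_self_of_ae_mem hμ]
  exact hf.continuousOn.integrableOn_compact hK

theorem dist_integral_le_of_ae_dist_le {α E : Type*} [MeasurableSpace α] [NormedAddCommGroup E]
    [NormedSpace ℝ E] {μ : Measure α} [IsFiniteMeasure μ] {f g : α → E} (hf : Integrable f μ)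
    (hg : Integrable g μ) {C : ℝ} (h : ∀ᵐ x ∂μ, dist (f x) (g x) ≤ C) :
    dist (∫ x, f x ∂μ) (∫ x, g x ∂μ) ≤ C * μ.real univ := by
  rw [dist_eq_norm, ← integral_sub hf hg]
  exact norm_integral_le_of_norm_le_const (h.mono fun x hx => by rwa [← dist_eq_norm])

theorem integral_Qpoly_add_two_add {ν : Measure ℝ} [IsFiniteMeasure ν] {K : Set ℝ}
    (hK : IsCompact K) (hν : ∀ᵐ x ∂ν, x ∈ K) (n : ℕ) :
    ∫ x, Qpoly (n + 2) x ∂ν + ∫ x, Qpoly n x ∂ν = 2 * ∫ x, Qpoly (n + 1) x ∂ν + ∫ x, x ^ n ∂ν := by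
  have hint : ∀ {f : ℝ → ℝ}, Continuous f → Integrable f ν :=
    fun hf => hf.integrable_of_ae_mem_compact hK hν
  rw [← integral_add (hint (continuous_Qpoly _)) (hint (continuous_Qpoly _)), ← integral_const_mul,
    ← integral_add ((hint (continuous_Qpoly _)).const_mul 2) (hint (continuous_pow n))]
  simp only [Qpoly_add_two_add]

section Moments

variable {p q : Measure ℝ} [IsFiniteMeasure p] [IsFiniteMeasure q] {a b : ℝ}

theorem integral_eval_eq_of_moments_eq (hp : ∀ᵐ x ∂p, x ∈ Icc a b) (hq : ∀ᵐ x ∂q, x ∈ Icc a b)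
    (hpq : ∀ n : ℕ, ∫ x, x ^ n ∂p = ∫ x, x ^ n ∂q) (P : ℝ[X]) :
    ∫ x, P.eval x ∂p = ∫ x, P.eval x ∂q := by
  induction P using Polynomial.induction_on' with
  | add P Q hP hQ =>
    have hint : ∀ {ν : Measure ℝ} [IsFiniteMeasure ν] (R : ℝ[X]), (∀ᵐ x ∂ν, x ∈ Icc a b) →
        Integrable (fun x => R.eval x) ν :=
      fun R hν => R.continuous.integrable_of_ae_mem_compact isCompact_Icc hν
    simp only [eval_add]
    rw [integral_add (hint P hp) (hint Q hp), integral_add (hint P hq) (hint Q hq), hP, hQ]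
  | monomial n c =>
    simp only [eval_monomial]
    rw [integral_const_mul, integral_const_mul, hpq n]

theorem integral_eq_of_moments_eq (hp : ∀ᵐ x ∂p, x ∈ Icc a b) (hq : ∀ᵐ x ∂q, x ∈ Icc a b)
    (hpq : ∀ n : ℕ, ∫ x, x ^ n ∂p = ∫ x, x ^ n ∂q) {f : ℝ → ℝ} (hf : Continuous f) :
    ∫ x, f x ∂p = ∫ x, f x ∂q := by
  have happrox : ∀ {ν : Measure ℝ} [IsFiniteMeasure ν], (∀ᵐ x ∂ν, x ∈ Icc a b) →
      ∀ (P : ℝ[X]) {ε : ℝ}, (∀ x ∈ Icc a b, |P.eval x - f x| < ε) →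
      dist (∫ x, f x ∂ν) (∫ x, P.eval x ∂ν) ≤ ε * ν.real univ := by
    intro ν _ hν P ε hP
    refine dist_integral_le_of_ae_dist_le (hf.integrable_of_ae_mem_compact isCompact_Icc hν)
      (P.continuous.integrable_of_ae_mem_compact isCompact_Icc hν) (hν.mono fun x hx => ?_)
    rw [dist_comm]
    exact (hP x hx).le
  refine eq_of_forall_dist_le fun ε hε => ?_
  set C := p.real univ + q.real univ + 1
  obtain ⟨P, hP⟩ := exists_polynomial_near_of_continuousOn a b f hf.continuousOn (ε / C)
    (by positivity)
  calc dist (∫ x, f x ∂p) (∫ x, f x ∂q)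
      ≤ dist (∫ x, f x ∂p) (∫ x, P.eval x ∂p) + dist (∫ x, f x ∂q) (∫ x, P.eval x ∂q) := by
        rw [integral_eval_eq_of_moments_eq hp hq hpq, dist_comm (∫ x, f x ∂q)]
        exact dist_triangle _ _ _
    _ ≤ ε / C * p.real univ + ε / C * q.real univ := add_le_add (happrox hp P hP) (happrox hq P hP)
    _ ≤ ε := by
        rw [← mul_add, div_mul_eq_mul_div, div_le_iff₀ (by positivity)]
        gcongr
        linarith

theorem MeasureTheory.Measure.eq_of_moments_eq (hp : ∀ᵐ x ∂p, x ∈ Icc a b)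
    (hq : ∀ᵐ x ∂q, x ∈ Icc a b) (hpq : ∀ n : ℕ, ∫ x, x ^ n ∂p = ∫ x, x ^ n ∂q) : p = q :=
  ext_of_forall_integral_eq_of_IsFiniteMeasure fun f =>
    integral_eq_of_moments_eq hp hq hpq f.continuous

end Moments

theorem MeasureTheory.Measure.eq_of_moments_sub_eq_const {p q : Measure ℝ} [IsFiniteMeasure p]
    [IsFiniteMeasure q] {a b : ℝ} (hp : ∀ᵐ x ∂p, x ∈ Icc a b) (hq : ∀ᵐ x ∂q, x ∈ Icc a b)
    (h1 : (1 : ℝ) ∈ Icc a b) (hatom : p {1} = q {1}) {t : ℝ}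
    (hpq : ∀ n : ℕ, ∫ x, x ^ n ∂p - ∫ x, x ^ n ∂q = t) : p = q := by
  have hδ : ∀ c : ℝ≥0, ∀ᵐ x ∂(c • Measure.dirac (1 : ℝ)), x ∈ Icc a b := fun c =>
    Measure.ae_smul_measure ((ae_dirac_iff measurableSet_Icc).2 h1) c
  have hint : ∀ {ν : Measure ℝ} [IsFiniteMeasure ν], (∀ᵐ x ∂ν, x ∈ Icc a b) → ∀ n : ℕ,
      Integrable (fun x : ℝ => x ^ n) ν :=
    fun hν n => (continuous_pow n).integrable_of_ae_mem_compact isCompact_Icc hν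
  have hshift : p + (-t).toNNReal • Measure.dirac 1 = q + t.toNNReal • Measure.dirac 1 := by
    refine Measure.eq_of_moments_eq (ae_add_measure_iff.2 ⟨hp, hδ _⟩)
      (ae_add_measure_iff.2 ⟨hq, hδ _⟩) fun n => ?_
    rw [integral_add_measure (hint hp n) (hint (hδ _) n),
      integral_add_measure (hint hq n) (hint (hδ _) n), integral_smul_nnreal_measure,
      integral_smul_nnreal_measure, integral_dirac]
    simp only [one_pow, NNReal.smul_def, smul_eq_mul, mul_one, Real.coe_toNNReal']
    linarith [hpq n, max_zero_sub_max_neg_zero_eq_self t]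
  have hparts : (-t).toNNReal = t.toNNReal := by
    have h := congrArg (· {1}) hshift
    simp only [Measure.add_apply, Measure.smul_apply, hatom] at h
    rw [Measure.dirac_apply_of_mem (mem_singleton 1)] at h
    simpa [ENNReal.smul_def] using (ENNReal.add_right_inj (measure_ne_top q _)).1 h
  have ht : t = 0 := by
    have := congrArg ((↑) : ℝ≥0 → ℝ) hparts
    simp only [Real.coe_toNNReal'] at this
    linarith [max_zero_sub_max_neg_zero_eq_self t]
  simpa [ht] using hshift

theorem MeasureTheory.SignedMeasure.totalVariation_eq_zero_of_forall_subset {α : Type*}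
    [MeasurableSpace α] (s : SignedMeasure α) {S : Set α} (hS : MeasurableSet S)
    (hs : ∀ Δ, MeasurableSet Δ → Δ ⊆ S → s Δ = 0) : s.totalVariation S = 0 := by
  obtain ⟨i, hi, _, _, hpos, hneg⟩ := s.toJordanDecomposition_spec
  rw [SignedMeasure.totalVariation, Measure.add_apply, hpos, hneg,
    SignedMeasure.toMeasureOfZeroLE_apply _ _ _ hS, SignedMeasure.toMeasureOfLEZero_apply _ _ _ hS]
  simp [hs _ (hi.inter hS) inter_subset_right, hs _ (hi.compl.inter hS) inter_subset_right]

theorem signedMeasure_Qpoly_uniqueness {s : SignedMeasure ℝ} {l r : ℝ} (h1 : (1 : ℝ) ∈ Icc l r)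
    (hs : ∀ Δ, MeasurableSet Δ → Δ ⊆ (Icc l r)ᶜ → s Δ = 0) (hs1 : s {1} = 0) {α β γ : ℝ}
    (heq : ∀ n : ℕ, α + β * n + γ * n ^ 2 + signedIntegral s (Qpoly n) = 0) :
    α = 0 ∧ β = 0 ∧ γ = 0 ∧ s = 0 := by
  set p := s.toJordanDecomposition.posPart
  set q := s.toJordanDecomposition.negPart
  obtain ⟨hp, hq⟩ : p (Icc l r)ᶜ = 0 ∧ q (Icc l r)ᶜ = 0 := add_eq_zero.1
    (SignedMeasure.totalVariation_eq_zero_of_forall_subset s measurableSet_Icc.compl hs)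
  have hatom : p {1} = q {1} := by
    have h := s.apply_eq_posPart_real_sub_negPart_real (measurableSet_singleton 1)
    rw [hs1, eq_comm, sub_eq_zero] at h
    exact (measureReal_eq_measureReal_iff (measure_ne_top _ _) (measure_ne_top _ _)).1 h
  have hmom : ∀ n : ℕ, ∫ x, x ^ n ∂p - ∫ x, x ^ n ∂q = -2 * γ := by
    intro n
    have hQp := integral_Qpoly_add_two_add isCompact_Icc hp n
    have hQq := integral_Qpoly_add_two_add isCompact_Icc hq n
    have h0 := heq n
    have h1 := heq (n + 1)
    have h2 := heq (n + 2)
    simp only [signedIntegral] at h0 h1 h2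
    push_cast at h1 h2
    linear_combination h2 - 2 * h1 + h0 - hQp + hQq
  have hpq : p = q := Measure.eq_of_moments_sub_eq_const hp hq h1 hatom hmom
  have hγ : γ = 0 := by simpa [hpq] using hmom 0
  have hsigned : ∀ f, signedIntegral s f = 0 := fun f => by
    change ∫ x, f x ∂p - ∫ x, f x ∂q = 0
    rw [hpq, sub_self]
  have hα : α = 0 := by simpa [hsigned] using heq 0
  have hβ : β = 0 := by simpa [hsigned, hα, hγ] using heq 1
  refine ⟨hα, hβ, hγ, ?_⟩
  rw [← s.toSignedMeasure_toJordanDecomposition, JordanDecomposition.toSignedMeasure]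
  change p.toSignedMeasure - q.toSignedMeasure = 0
  simp only [hpq, sub_self]

theorem MeasureTheory.ComplexMeasure.eq_zero_of_re_of_im {α : Type*} [MeasurableSpace α]
    {μ : ComplexMeasure α} (hre : ComplexMeasure.re μ = 0) (him : ComplexMeasure.im μ = 0) :
    μ = 0 := by
  apply ComplexMeasure.equivSignedMeasure.injective
  change (ComplexMeasure.re μ, ComplexMeasure.im μ) = (ComplexMeasure.re 0, ComplexMeasure.im 0)
  rw [hre, him, map_zero, map_zero]

theorem complexIntegral_re (μ : ComplexMeasure ℝ) (f : ℝ → ℝ) :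
    (complexIntegral μ f).re = signedIntegral (ComplexMeasure.re μ) f := by
  simp [complexIntegral]

theorem complexIntegral_im (μ : ComplexMeasure ℝ) (f : ℝ → ℝ) :
    (complexIntegral μ f).im = signedIntegral (ComplexMeasure.im μ) f := by
  simp [complexIntegral]

/-- If `a, b, c ∈ ℂ` and `μ` is a complex Borel measure on `ℝ` with `μ({1}) = 0`, whose total
variation is compactly supported (i.e. `μ` vanishes on all measurable subsets of the complement
of some compact set), and `a + b n + c n² + ∫ Q_n dμ = 0` for every `n ∈ ℤ₊`, then
`a = b = c = 0` and `μ = 0`. -/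
theorem complexMeasure_Qpoly_uniqueness (a b c : ℂ) (μ : ComplexMeasure ℝ)
    (hone : μ ({1} : Set ℝ) = 0)
    (hcomp : ∃ K : Set ℝ, IsCompact K ∧ ∀ Δ : Set ℝ, MeasurableSet Δ → Δ ⊆ Kᶜ → μ Δ = 0)
    (heq : ∀ n : ℕ, a + b * (n : ℂ) + c * (n : ℂ) ^ 2 + complexIntegral μ (Qpoly n) = 0) :
    a = 0 ∧ b = 0 ∧ c = 0 ∧ μ = 0 := by
  obtain ⟨K, hK, hKμ⟩ := hcomp
  obtain ⟨l, r, hKI⟩ := bddBelow_bddAbove_iff_subset_Icc.1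
    ⟨(hK.insert 1).bddBelow, (hK.insert 1).bddAbove⟩
  have hμ : ∀ Δ, MeasurableSet Δ → Δ ⊆ (Icc l r)ᶜ → μ Δ = 0 := fun Δ hΔ hsub =>
    hKμ Δ hΔ (hsub.trans (compl_subset_compl.2 ((subset_insert 1 K).trans hKI)))
  have h1 : (1 : ℝ) ∈ Icc l r := hKI (mem_insert 1 K)
  have heq' : ∀ n : ℕ,
      a + b * (n : ℝ) + c * ((n : ℝ) ^ 2 : ℝ) + complexIntegral μ (Qpoly n) = 0 := fun n => by
    simpa using heq n
  obtain ⟨hare, hbre, hcre, hre⟩ := signedMeasure_Qpoly_uniqueness (s := ComplexMeasure.re μ) h1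
    (fun Δ hΔ hsub => congrArg Complex.re (hμ Δ hΔ hsub)) (congrArg Complex.re hone)
    fun n => by
      simpa only [Complex.add_re, Complex.re_mul_ofReal, complexIntegral_re, Complex.zero_re]
        using congrArg Complex.re (heq' n)
  obtain ⟨haim, hbim, hcim, him⟩ := signedMeasure_Qpoly_uniqueness (s := ComplexMeasure.im μ) h1
    (fun Δ hΔ hsub => congrArg Complex.im (hμ Δ hΔ hsub)) (congrArg Complex.im hone)
    fun n => by
      simpa only [Complex.add_im, Complex.im_mul_ofReal, complexIntegral_im, Complex.zero_im]
        using congrArg Complex.im (heq' n)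
  exact ⟨Complex.ext hare haim, Complex.ext hbre hbim, Complex.ext hcre hcim,
    ComplexMeasure.eq_zero_of_re_of_im hre him⟩

end
end

section
/- Let p be a polynomial in one indeterminate with real coefficients. Then the sequence {p(n)}_{n≥0} is CPD if and only if either deg p ≤ 1, or deg p = 2 and the leading coefficient of p is positive. -/
open Polynomial Filter
open scoped ComplexOrder

noncomputable section

lemma nat_nine_ineq : ∀ d : ℕ, 5 ≤ d → 8^d + 2*6^d + 2*3^d + 2*2^d ≤ 9^d := by
  intro d hd
  induction d, hd using Nat.le_induction with
  | base => norm_num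
  | succ n hn ih =>
    simp only [pow_succ]
    nlinarith [ih, Nat.zero_le (8^n), Nat.zero_le (6^n), Nat.zero_le (3^n), Nat.zero_le (2^n)]

lemma Kpos (d : ℕ) (hd : 3 ≤ d) :
    0 < ((3:ℝ)^d - 2^d - 1)^2 - ((2:ℝ)^d - 2)*((4:ℝ)^d - 2*2^d) := by
  rcases lt_or_ge d 5 with h5 | h5
  · interval_cases d <;> norm_num
  · have h := nat_nine_ineq d h5
    have hcast : ((8^d + 2*6^d + 2*3^d + 2*2^d : ℕ) : ℝ) ≤ ((9^d : ℕ) : ℝ) := by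
      exact_mod_cast h
    push_cast at hcast
    have h4 : (4:ℝ)^d = 2^d * 2^d := by rw [← mul_pow]; norm_num
    have h6 : (6:ℝ)^d = 2^d * 3^d := by rw [← mul_pow]; norm_num
    have h8 : (8:ℝ)^d = 2^d * (2^d * 2^d) := by rw [← mul_pow, ← mul_pow]; norm_num
    have h9 : (9:ℝ)^d = 3^d * 3^d := by rw [← mul_pow]; norm_num
    rw [h6, h8, h9] at hcast
    rw [h4]
    nlinarith [hcast, sq_nonneg ((2:ℝ)^d), pow_pos (show (0:ℝ) < 2 by norm_num) d]


lemma isCPD_of_quadratic (p : ℝ[X]) (h3 : p.natDegree < 3) (hc2 : 0 ≤ p.coeff 2) :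
    IsCPDSeq (fun n : ℕ => p.eval (n : ℝ)) := by
  intro k l hl
  set c0 := p.coeff 0
  set c1 := p.coeff 1
  set c2 := p.coeff 2
  set S1 : ℂ := ∑ i ∈ Finset.range (k+1), (i:ℂ) * l i with hS1
  have key : ∀ i j : ℕ, ((p.eval ((i+j : ℕ):ℝ) : ℝ):ℂ) * l i * (starRingEnd ℂ) (l j)
      = (c0:ℂ) * (l i * (starRingEnd ℂ) (l j))
        + (c1:ℂ) * (((i:ℂ)*l i) * (starRingEnd ℂ) (l j))
        + (c1:ℂ) * (l i * ((j:ℂ)*(starRingEnd ℂ) (l j)))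
        + (c2:ℂ) * (((i:ℂ)^2*l i) * (starRingEnd ℂ) (l j))
        + (2*(c2:ℂ)) * (((i:ℂ)*l i)*((j:ℂ)*(starRingEnd ℂ) (l j)))
        + (c2:ℂ) * (l i * ((j:ℂ)^2 * (starRingEnd ℂ) (l j))) := by
    intro i j
    rw [Polynomial.eval_eq_sum_range' h3]
    push_cast
    simp [Finset.sum_range_succ]
    ring
  have hconj0 : ∑ j ∈ Finset.range (k+1), (starRingEnd ℂ) (l j) = 0 := by
    rw [← map_sum, hl, map_zero]
  have main : ∑ i ∈ Finset.range (k + 1), ∑ j ∈ Finset.range (k + 1),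
        ((p.eval ((i + j : ℕ) : ℝ) : ℝ) : ℂ) * l i * (starRingEnd ℂ) (l j)
      = 2*(c2:ℂ) * (S1 * (starRingEnd ℂ) S1) := by
    simp only [key, Finset.sum_add_distrib, ← Finset.mul_sum, ← Finset.sum_mul]
    rw [hl, hconj0, map_sum]
    simp only [map_mul, Complex.conj_natCast]
    ring
  have main2 : ∑ i ∈ Finset.range (k + 1), ∑ j ∈ Finset.range (k + 1),
        ((p.eval ((i + j : ℕ) : ℝ) : ℝ) : ℂ) * l i * (starRingEnd ℂ) (l j)
      = ((2 * c2 * Complex.normSq S1 : ℝ) : ℂ) := by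
    rw [main, Complex.mul_conj]; push_cast; ring
  show (0:ℂ) ≤ _
  rw [show (∑ i ∈ Finset.range (k + 1), ∑ j ∈ Finset.range (k + 1),
        (((fun n : ℕ => p.eval (n:ℝ)) (i + j) : ℝ) : ℂ) * l i * (starRingEnd ℂ) (l j)) =
      ((2 * c2 * Complex.normSq S1 : ℝ) : ℂ) from main2]
  rw [Complex.zero_le_real]
  exact mul_nonneg (by linarith) (Complex.normSq_nonneg _)


lemma cpd_quadratic_form (γ : ℕ → ℝ) (h : IsCPDSeq γ) (s : ℕ) (hs : 1 ≤ s) (y z : ℝ) :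
    0 ≤ y^2*(γ 0 - 2*γ s + γ (2*s)) + 2*y*z*(γ 0 - γ s - γ (2*s) + γ (3*s))
      + z^2*(γ 0 - 2*γ (2*s) + γ (4*s)) := by
  classical
  set l : ℕ → ℂ := fun i => if i = 0 then ((-(y+z) : ℝ) : ℂ) else if i = s then (y:ℂ)
    else if i = 2*s then (z:ℂ) else 0 with hldef
  have h0s : (0:ℕ) ≠ s := by omega
  have h02 : (0:ℕ) ≠ 2*s := by omega
  have hs2 : s ≠ 2*s := by omega
  have hSsub : ({0, s, 2*s} : Finset ℕ) ⊆ Finset.range (2*s + 1) := by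
    intro i hi; simp only [Finset.mem_insert, Finset.mem_singleton] at hi
    rcases hi with rfl|rfl|rfl <;> simp [Finset.mem_range] <;> omega
  have hlzero : ∀ i, i ∉ ({0, s, 2*s} : Finset ℕ) → l i = 0 := by
    intro i hi; simp only [Finset.mem_insert, Finset.mem_singleton, not_or] at hi
    simp [hldef, hi.1, hi.2.1, hi.2.2]
  have hmem : (0:ℕ) ∈ ({0, s, 2*s} : Finset ℕ) := by simp
  have hsum0 : ∑ i ∈ Finset.range (2*s + 1), l i = 0 := by
    rw [← Finset.sum_subset hSsub (fun i _ hi => hlzero i hi)]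
    have h1 : (0:ℕ) ∉ ({s, 2*s} : Finset ℕ) := by simp; omega
    have h2 : s ∉ ({2*s} : Finset ℕ) := by simp; omega
    rw [Finset.sum_insert h1, Finset.sum_insert h2, Finset.sum_singleton]
    simp [hldef, h0s.symm, h02.symm, hs2, h0s, h02]
  have := h (2*s) l hsum0
  -- reduce the double sum to the 3x3 explicit sum
  have hinner : ∀ i : ℕ, ∑ j ∈ Finset.range (2*s+1), (γ (i + j) : ℂ) * l i * (starRingEnd ℂ) (l j)
      = ∑ j ∈ ({0, s, 2*s} : Finset ℕ), (γ (i + j) : ℂ) * l i * (starRingEnd ℂ) (l j) := by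
    intro i
    rw [← Finset.sum_subset hSsub]
    intro j _ hj; rw [hlzero j hj]; simp
  have houter : ∑ i ∈ Finset.range (2*s+1), ∑ j ∈ Finset.range (2*s+1),
        (γ (i + j) : ℂ) * l i * (starRingEnd ℂ) (l j)
      = ∑ i ∈ ({0, s, 2*s} : Finset ℕ), ∑ j ∈ ({0, s, 2*s} : Finset ℕ),
        (γ (i + j) : ℂ) * l i * (starRingEnd ℂ) (l j) := by
    rw [← Finset.sum_subset hSsub]
    · exact Finset.sum_congr rfl fun i _ => hinner i
    · intro i _ hi
      rw [Finset.sum_eq_zero]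
      intro j _; rw [hlzero i hi]; simp
  rw [houter] at this
  have hexp : ∑ i ∈ ({0, s, 2*s} : Finset ℕ), ∑ j ∈ ({0, s, 2*s} : Finset ℕ),
        (γ (i + j) : ℂ) * l i * (starRingEnd ℂ) (l j)
      = ((y^2*(γ 0 - 2*γ s + γ (2*s)) + 2*y*z*(γ 0 - γ s - γ (2*s) + γ (3*s))
      + z^2*(γ 0 - 2*γ (2*s) + γ (4*s)) : ℝ) : ℂ) := by
    have h1 : (0:ℕ) ∉ ({s, 2*s} : Finset ℕ) := by simp; omega
    have h2 : s ∉ ({2*s} : Finset ℕ) := by simp; omega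
    simp only [Finset.sum_insert h1, Finset.sum_insert h2, Finset.sum_singleton]
    simp only [hldef, if_pos rfl, if_neg h0s.symm, if_neg h02.symm, if_neg h0s,
      if_neg h02, if_neg hs2, if_neg hs2.symm, reduceIte]
    have e1 : s + s = 2*s := by ring_nf
    have e2 : s + 2*s = 3*s := by ring_nf
    have e3 : 2*s + s = 3*s := by ring_nf
    have e4 : 2*s + 2*s = 4*s := by ring_nf
    have e5 : 0 + s = s := by omega
    have e6 : 0 + 2*s = 2*s := by omega
    have e7 : s + 0 = s := by omega
    have e8 : 2*s + 0 = 2*s := by omega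
    rw [e1, e2, e3, e4, e5, e6, e7, e8]
    simp only [Complex.conj_ofReal]
    push_cast
    ring
  rw [hexp] at this
  exact Complex.zero_le_real.mp this


lemma two_lt_two_pow (d : ℕ) (hd : 2 ≤ d) : (2:ℝ) < 2^d := by
  calc (2:ℝ) < 2^2 := by norm_num
  _ ≤ 2^d := by apply pow_le_pow_right₀ (by norm_num) hd

lemma three_pow_gt (d : ℕ) (hd : 2 ≤ d) : (2:ℝ)^d + 1 < 3^d := by
  induction d, hd using Nat.le_induction with
  | base => norm_num
  | succ n hn ih =>
    have h3 : (0:ℝ) < 2^n := by positivity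
    rw [pow_succ, pow_succ]
    nlinarith

lemma deg_ge_three_not_cpd (p : ℝ[X]) (hd : 3 ≤ p.natDegree)
    (h : IsCPDSeq (fun n : ℕ => p.eval (n : ℝ))) : False := by
  set d := p.natDegree with hddef
  set γ : ℕ → ℝ := fun n : ℕ => p.eval (n : ℝ) with hγ
  -- discriminant inequality
  have hBC : ∀ s : ℕ, 1 ≤ s →
      (γ 0 - γ s - γ (2*s) + γ (3*s))^2
        ≤ (γ 0 - 2*γ s + γ (2*s)) * (γ 0 - 2*γ (2*s) + γ (4*s)) := by
    intro s hs
    have hq : ∀ x : ℝ, 0 ≤ (γ 0 - 2*γ s + γ (2*s)) * (x*x)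
        + (2*(γ 0 - γ s - γ (2*s) + γ (3*s))) * x + (γ 0 - 2*γ (2*s) + γ (4*s)) := by
      intro x
      have := cpd_quadratic_form γ h s hs x 1
      nlinarith [this]
    have := discrim_le_zero hq
    rw [discrim] at this
    nlinarith [this]
  -- the comparison polynomials
  have hd1 : d < d + 1 := Nat.lt_succ_self d
  set Bq : ℝ[X] := ∑ e ∈ Finset.range (d+1),
      Polynomial.monomial e (p.coeff e * ((0:ℝ)^e - 1 - 2^e + 3^e)) with hBq
  set C1q : ℝ[X] := ∑ e ∈ Finset.range (d+1),
      Polynomial.monomial e (p.coeff e * ((0:ℝ)^e - 2 + 2^e)) with hC1q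
  set C2q : ℝ[X] := ∑ e ∈ Finset.range (d+1),
      Polynomial.monomial e (p.coeff e * ((0:ℝ)^e - 2*2^e + 4^e)) with hC2q
  -- eval identities
  have hkey : ∀ (s : ℕ) (u : ℝ), (u = 0 ∨ u = 1 ∨ u = 2 ∨ u = 3 ∨ u = 4) →
      ∀ e : ℕ, p.coeff e * u^e * (s:ℝ)^e = p.coeff e * ((u*s:ℝ))^e := by
    intro s u _ e; rw [mul_pow]; ring
  have hevals : ∀ (m s : ℕ), p.eval ((m * s : ℕ) : ℝ)
      = ∑ e ∈ Finset.range (d+1), p.coeff e * (m:ℝ)^e * (s:ℝ)^e := by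
    intro m s
    rw [Polynomial.eval_eq_sum_range' hd1]
    push_cast
    exact Finset.sum_congr rfl fun e _ => by rw [mul_pow]; ring
  have heval0 : p.eval ((0:ℕ) : ℝ) = ∑ e ∈ Finset.range (d+1), p.coeff e * (0:ℝ)^e := by
    rw [Polynomial.eval_eq_sum_range' hd1]; norm_num
  have hevalB : ∀ s : ℕ, Bq.eval (s:ℝ) = γ 0 - γ s - γ (2*s) + γ (3*s) := by
    intro s
    rw [hBq, Polynomial.eval_finset_sum]
    simp only [Polynomial.eval_monomial]
    have h1 : γ s = p.eval ((1 * s : ℕ) : ℝ) := by norm_num [hγ]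
    have h2 : γ (2*s) = p.eval ((2 * s : ℕ) : ℝ) := rfl
    have h3 : γ (3*s) = p.eval ((3 * s : ℕ) : ℝ) := rfl
    have h0 : γ 0 = p.eval ((0:ℕ) : ℝ) := rfl
    rw [h0, h1, h2, h3, heval0, hevals, hevals, hevals]
    rw [← Finset.sum_sub_distrib, ← Finset.sum_sub_distrib, ← Finset.sum_add_distrib]
    exact Finset.sum_congr rfl fun e _ => by
      rcases Nat.eq_zero_or_pos e with rfl | he
      · norm_num; try ring
      · rw [zero_pow he.ne']; push_cast; ring
  have hevalC1 : ∀ s : ℕ, C1q.eval (s:ℝ) = γ 0 - 2*γ s + γ (2*s) := by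
    intro s
    rw [hC1q, Polynomial.eval_finset_sum]
    simp only [Polynomial.eval_monomial]
    have h1 : γ s = p.eval ((1 * s : ℕ) : ℝ) := by norm_num [hγ]
    have h2 : γ (2*s) = p.eval ((2 * s : ℕ) : ℝ) := rfl
    have h0 : γ 0 = p.eval ((0:ℕ) : ℝ) := rfl
    rw [h0, h1, h2, heval0, hevals, hevals]
    rw [Finset.mul_sum, ← Finset.sum_sub_distrib, ← Finset.sum_add_distrib]
    exact Finset.sum_congr rfl fun e _ => by
      rcases Nat.eq_zero_or_pos e with rfl | he
      · norm_num; try ring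
      · rw [zero_pow he.ne']; push_cast; ring
  have hevalC2 : ∀ s : ℕ, C2q.eval (s:ℝ) = γ 0 - 2*γ (2*s) + γ (4*s) := by
    intro s
    rw [hC2q, Polynomial.eval_finset_sum]
    simp only [Polynomial.eval_monomial]
    have h2 : γ (2*s) = p.eval ((2 * s : ℕ) : ℝ) := rfl
    have h4 : γ (4*s) = p.eval ((4 * s : ℕ) : ℝ) := rfl
    have h0 : γ 0 = p.eval ((0:ℕ) : ℝ) := rfl
    rw [h0, h2, h4, heval0, hevals, hevals]
    rw [Finset.mul_sum, ← Finset.sum_sub_distrib, ← Finset.sum_add_distrib]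
    exact Finset.sum_congr rfl fun e _ => by
      rcases Nat.eq_zero_or_pos e with rfl | he
      · norm_num; try ring
      · rw [zero_pow he.ne']; push_cast; ring
  -- coefficients
  have coeff_sum : ∀ (f : ℕ → ℝ) (n : ℕ), n < d + 1 →
      (∑ e ∈ Finset.range (d+1), Polynomial.monomial e (f e)).coeff n = f n := by
    intro f n hn
    rw [Polynomial.finset_sum_coeff]
    simp only [Polynomial.coeff_monomial]
    rw [Finset.sum_ite_eq' (Finset.range (d+1)) n f]
    simp [Finset.mem_range, hn]
  have natDeg_sum_le : ∀ (f : ℕ → ℝ),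
      (∑ e ∈ Finset.range (d+1), Polynomial.monomial e (f e)).natDegree ≤ d := by
    intro f
    apply Polynomial.natDegree_sum_le_of_forall_le
    intro e he
    exact le_trans (Polynomial.natDegree_monomial_le _) (by simp [Finset.mem_range] at he; omega)
  have hp0 : p ≠ 0 := by
    intro h0
    have hd' := hd
    rw [hddef, h0] at hd'
    simp at hd'
  have hlc : p.coeff d ≠ 0 := by
    rw [hddef]; exact Polynomial.leadingCoeff_ne_zero.mpr hp0
  have h0d : (0:ℝ)^d = 0 := zero_pow (by omega)
  have hfB : (0:ℝ)^d - 1 - 2^d + 3^d > 0 := by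
    have := three_pow_gt d (by omega); rw [h0d]; linarith
  have hfC1 : (0:ℝ)^d - 2 + 2^d > 0 := by
    have := two_lt_two_pow d (by omega); rw [h0d]; linarith
  have hfC2 : (0:ℝ)^d - 2*2^d + 4^d > 0 := by
    have h2 := two_lt_two_pow d (by omega)
    have h4 : (4:ℝ)^d = 2^d * 2^d := by rw [← mul_pow]; norm_num
    have : (0:ℝ) < 2^d := by positivity
    rw [h0d, h4]; nlinarith
  have hcB : Bq.coeff d = p.coeff d * ((0:ℝ)^d - 1 - 2^d + 3^d) := coeff_sum _ d hd1
  have hcC1 : C1q.coeff d = p.coeff d * ((0:ℝ)^d - 2 + 2^d) := coeff_sum _ d hd1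
  have hcC2 : C2q.coeff d = p.coeff d * ((0:ℝ)^d - 2*2^d + 4^d) := coeff_sum _ d hd1
  have hndB : Bq.natDegree = d :=
    le_antisymm (natDeg_sum_le _)
      (Polynomial.le_natDegree_of_ne_zero (by rw [hcB]; exact mul_ne_zero hlc (ne_of_gt hfB)))
  have hndC1 : C1q.natDegree = d :=
    le_antisymm (natDeg_sum_le _)
      (Polynomial.le_natDegree_of_ne_zero (by rw [hcC1]; exact mul_ne_zero hlc (ne_of_gt hfC1)))
  have hndC2 : C2q.natDegree = d :=
    le_antisymm (natDeg_sum_le _)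
      (Polynomial.le_natDegree_of_ne_zero (by rw [hcC2]; exact mul_ne_zero hlc (ne_of_gt hfC2)))
  set r : ℝ[X] := Bq * Bq - C1q * C2q with hr
  have hrcoeff : r.coeff (d + d) = Bq.coeff d * Bq.coeff d - C1q.coeff d * C2q.coeff d := by
    rw [hr, Polynomial.coeff_sub]
    congr 1
    · conv_lhs => rw [show d + d = Bq.natDegree + Bq.natDegree by rw [hndB]]
      rw [Polynomial.coeff_mul_degree_add_degree]
      rw [Polynomial.leadingCoeff, hndB]
    · conv_lhs => rw [show d + d = C1q.natDegree + C2q.natDegree by rw [hndC1, hndC2]]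
      rw [Polynomial.coeff_mul_degree_add_degree]
      rw [Polynomial.leadingCoeff, Polynomial.leadingCoeff, hndC1, hndC2]
  have hrpos : 0 < r.coeff (d + d) := by
    rw [hrcoeff, hcB, hcC1, hcC2, h0d]
    have hK := Kpos d hd
    have hsq : (p.coeff d)^2 > 0 := by positivity
    nlinarith [hK, hsq]
  have hrnd : r.natDegree = d + d := by
    refine le_antisymm ?_ (Polynomial.le_natDegree_of_ne_zero (ne_of_gt hrpos))
    refine le_trans (Polynomial.natDegree_sub_le _ _) ?_
    simp only [max_le_iff]
    constructor
    · exact le_trans Polynomial.natDegree_mul_le (by rw [hndB])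
    · exact le_trans Polynomial.natDegree_mul_le (by rw [hndC1, hndC2])
  have hrne : r ≠ 0 := fun h0 => by rw [h0] at hrpos; simp at hrpos
  have hrlc : 0 < r.leadingCoeff := by rw [Polynomial.leadingCoeff, hrnd]; exact hrpos
  have hrdeg : 0 < r.degree := by
    rw [Polynomial.degree_eq_natDegree hrne, hrnd]
    exact_mod_cast by omega
  have htend : Tendsto (fun x : ℝ => r.eval x) atTop atTop :=
    Polynomial.tendsto_atTop_of_leadingCoeff_nonneg r hrdeg (le_of_lt hrlc)
  have htendN : Tendsto (fun n : ℕ => r.eval (n:ℝ)) atTop atTop :=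
    htend.comp tendsto_natCast_atTop_atTop
  have hev : ∀ᶠ n : ℕ in atTop, 0 < r.eval (n:ℝ) := htendN.eventually_gt_atTop 0
  obtain ⟨s, hspos, hs1⟩ := (hev.and (eventually_ge_atTop 1)).exists
  have hle := hBC s hs1
  have : r.eval (s:ℝ) ≤ 0 := by
    rw [hr]
    simp only [Polynomial.eval_sub, Polynomial.eval_mul, hevalB, hevalC1, hevalC2]
    nlinarith [hle]
  linarith


/-- Proposition `ojoj1`: for a real polynomial `p`, the sequence `{p(n)}ₙ` is CPD if and only
if either `deg p ≤ 1`, or `deg p = 2` and the leading coefficient of `p` is positive. -/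
theorem polynomial_seq_isCPD_iff (p : Polynomial ℝ) :
    IsCPDSeq (fun n : ℕ => p.eval (n : ℝ)) ↔
      (p.degree ≤ 1 ∨ (p.degree = 2 ∧ 0 < p.leadingCoeff)) := by
  constructor
  · intro h
    by_cases hdeg : p.degree ≤ 1
    · exact Or.inl hdeg
    right
    have hp0 : p ≠ 0 := by
      intro h0; rw [h0] at hdeg; simp at hdeg
    have hnd2 : 2 ≤ p.natDegree := by
      by_contra hlt
      push_neg at hlt
      exact hdeg (Polynomial.natDegree_le_iff_degree_le.mp (Nat.lt_succ_iff.mp hlt))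
    have hnd3 : p.natDegree < 3 := by
      by_contra h3
      push_neg at h3
      exact deg_ge_three_not_cpd p h3 h
    have hnd : p.natDegree = 2 := by omega
    have hq := cpd_quadratic_form _ h 1 le_rfl 1 0
    have hC : 0 ≤ p.eval ((0:ℕ):ℝ) - 2 * p.eval ((1:ℕ):ℝ) + p.eval ((2:ℕ):ℝ) := by
      simpa using hq
    have hex : ∀ x : ℝ, p.eval x = p.coeff 0 + p.coeff 1 * x + p.coeff 2 * x^2 := by
      intro x
      rw [Polynomial.eval_eq_sum_range' (show p.natDegree < 3 by omega)]
      simp [Finset.sum_range_succ]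
      all_goals ring
    have hC2 : 0 ≤ p.coeff 2 := by
      rw [hex, hex, hex] at hC
      norm_num at hC
      nlinarith [hC]
    have hcl : p.leadingCoeff = p.coeff 2 := by rw [Polynomial.leadingCoeff, hnd]
    have hne : p.leadingCoeff ≠ 0 := Polynomial.leadingCoeff_ne_zero.mpr hp0
    refine ⟨?_, ?_⟩
    · rw [Polynomial.degree_eq_natDegree hp0, hnd]; rfl
    · rw [hcl] at hne ⊢
      exact lt_of_le_of_ne hC2 (Ne.symm hne)
  · intro h
    have hnd3 : p.natDegree < 3 := by
      rcases h with h1 | ⟨h2, _⟩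
      · have h1' : p.natDegree ≤ 1 := Polynomial.natDegree_le_iff_degree_le.mpr h1
        omega
      · have : p.natDegree = 2 := Polynomial.natDegree_eq_of_degree_eq_some (by exact_mod_cast h2)
        omega
    apply isCPD_of_quadratic p hnd3
    rcases h with h1 | ⟨h2, hlc⟩
    · have hz : p.coeff 2 = 0 :=
        Polynomial.coeff_eq_zero_of_degree_lt (lt_of_le_of_lt h1 (by norm_num))
      rw [hz]
    · have hnd : p.natDegree = 2 := Polynomial.natDegree_eq_of_degree_eq_some (by exact_mod_cast h2)
      have : p.coeff 2 = p.leadingCoeff := by rw [Polynomial.leadingCoeff, hnd]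
      rw [this]
      exact le_of_lt hlc

end
end

section
/- Let {γ_n}_{n≥0} be a sequence of real numbers with limsup_{n→∞} |γ_n|^{1/n} < ∞. The following are equivalent: (i) {γ_n} is PD; (ii) for every θ ∈ ℝ the sequence {θⁿγ_n}_{n≥0} is CPD; (iii) zero is an accumulation point of the set of all θ ∈ ℝ∖{0} for which {θⁿγ_n}_{n≥0} is CPD; (iv) there exists θ ∈ ℝ∖{0} such that |θ|·limsup_{n→∞}|γ_n|^{1/n} < 1 and {θⁿγ_n}_{n≥0} is CPD. -/
open MeasureTheory Filter Topology
open scoped ComplexOrder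

noncomputable section

/-- A real sequence `γ` is *positive definite* (PD) if
`∑_{i,j=0}^k γ_{i+j} λ_i conj(λ_j) ≥ 0` for all finite sequences `λ_0, …, λ_k ∈ ℂ`. -/
def IsPDSeq (γ : ℕ → ℝ) : Prop :=
  ∀ (k : ℕ) (l : ℕ → ℂ),
    0 ≤ ∑ i ∈ Finset.range (k + 1), ∑ j ∈ Finset.range (k + 1),
        (γ (i + j) : ℂ) * l i * (starRingEnd ℂ) (l j)

/-- `(b, c, ν)` is a representing triplet of the sequence `γ`: `b ∈ ℝ`, `c ≥ 0`, `ν` a finite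
compactly supported Borel measure on `ℝ` with `ν({1}) = 0`, and
`γ_n = γ_0 + b n + c n² + ∫ Q_n dν` for all `n`. -/
def IsRepTriplet (γ : ℕ → ℝ) (b c : ℝ) (ν : Measure ℝ) : Prop :=
  0 ≤ c ∧ IsFiniteMeasure ν ∧ (∃ K : Set ℝ, IsCompact K ∧ ν Kᶜ = 0) ∧
    ν ({1} : Set ℝ) = 0 ∧
    ∀ n : ℕ, γ n = γ 0 + b * n + c * (n : ℝ) ^ 2 + ∫ x, Qpoly n x ∂ν

/-- The sequence `n ↦ |γ_n|^{1/n}`. -/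
def rootSeq (γ : ℕ → ℝ) : ℕ → ℝ := fun n => |γ n| ^ ((1 : ℝ) / n)

/-- `limsup_{n → ∞} |γ_n|^{1/n} < ∞`, i.e. the sequence `|γ_n|^{1/n}` is (eventually)
bounded above. -/
def FiniteExpGrowth (γ : ℕ → ℝ) : Prop :=
  IsBoundedUnder (· ≤ ·) atTop (rootSeq γ)

/-- `limsup_{n → ∞} |γ_n|^{1/n}` (as a real number). -/
def limsupRoot (γ : ℕ → ℝ) : ℝ := limsup (rootSeq γ) atTop

/-- The closed support of a Borel measure on `ℝ`: the set of points all of whose open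
neighbourhoods have nonzero measure. -/
def measSupport (ν : Measure ℝ) : Set ℝ :=
  {x : ℝ | ∀ U : Set ℝ, IsOpen U → x ∈ U → ν U ≠ 0}

/-- The difference transformation `Δ`, `(Δγ)_n = γ_{n+1} - γ_n`. -/
def deltaSeq (γ : ℕ → ℝ) : ℕ → ℝ := fun n => γ (n + 1) - γ n

/-!
If `γ` is PD then so is every `θⁿγₙ` (substitute `θⁱλᵢ` for `λᵢ`), hence it is CPD. Conversely,
if `θ ≠ 0` and `|θ| · limsup |γₙ|^{1/n} < 1`, then `δₙ = θⁿγₙ → 0`, and a CPD sequence tending to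
`0` is PD: appending to `λ₀, …, λₖ` the weight `-∑ λᵢ` at a far index `m` gives an admissible
vector whose Hankel form differs from that of `λ` only by terms carrying `δ_{≥ m}`. Scaling back
by `θ⁻¹` shows that `γ` is PD.
-/

def hankelSum (γ : ℕ → ℝ) (s : Finset ℕ) (l : ℕ → ℂ) : ℂ :=
  ∑ i ∈ s, ∑ j ∈ s, (γ (i + j) : ℂ) * l i * (starRingEnd ℂ) (l j)

lemma isPDSeq_iff_hankelSum {γ : ℕ → ℝ} :
    IsPDSeq γ ↔ ∀ (k : ℕ) (l : ℕ → ℂ), 0 ≤ hankelSum γ (Finset.range (k + 1)) l :=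
  Iff.rfl

lemma IsPDSeq.isCPDSeq {γ : ℕ → ℝ} (h : IsPDSeq γ) : IsCPDSeq γ := fun k l _ => h k l

lemma hankelSum_geom_mul (γ : ℕ → ℝ) (θ : ℝ) (s : Finset ℕ) (l : ℕ → ℂ) :
    hankelSum (fun n => θ ^ n * γ n) s l = hankelSum γ s (fun i => (θ : ℂ) ^ i * l i) := by
  refine Finset.sum_congr rfl fun i _ => Finset.sum_congr rfl fun j _ => ?_
  simp only [map_mul, map_pow, Complex.conj_ofReal, Complex.ofReal_mul, Complex.ofReal_pow]
  ring

lemma IsPDSeq.geom_mul {γ : ℕ → ℝ} (h : IsPDSeq γ) (θ : ℝ) :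
    IsPDSeq fun n => θ ^ n * γ n :=
  isPDSeq_iff_hankelSum.2 fun k l => by
    rw [hankelSum_geom_mul]
    exact h k _

lemma IsPDSeq.of_geom_mul {γ : ℕ → ℝ} {θ : ℝ} (hθ : θ ≠ 0)
    (h : IsPDSeq fun n => θ ^ n * γ n) : IsPDSeq γ := by
  have hγ : (fun n => θ⁻¹ ^ n * (θ ^ n * γ n)) = γ := by
    funext n
    rw [← mul_assoc, ← mul_pow, inv_mul_cancel₀ hθ, one_pow, one_mul]
  simpa only [hγ] using h.geom_mul θ⁻¹

lemma hankelSum_of_subset {γ : ℕ → ℝ} {s t : Finset ℕ} {l : ℕ → ℂ} (hst : s ⊆ t)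
    (hl : ∀ i ∈ t, i ∉ s → l i = 0) : hankelSum γ t l = hankelSum γ s l := by
  unfold hankelSum
  rw [← Finset.sum_subset hst fun i hit his => by simp [hl i hit his]]
  exact Finset.sum_congr rfl fun i _ =>
    (Finset.sum_subset hst fun j hjt hjs => by simp [hl j hjt hjs]).symm

lemma hankelSum_insert {γ : ℕ → ℝ} {s : Finset ℕ} {m : ℕ} (hm : m ∉ s) {l u : ℕ → ℂ}
    (hu : ∀ i ∈ s, u i = l i) :
    hankelSum γ (insert m s) u = hankelSum γ s l
      + ∑ i ∈ s, (γ (m + i) : ℂ) * (l i * (starRingEnd ℂ) (u m) + u m * (starRingEnd ℂ) (l i))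
      + (γ (m + m) : ℂ) * (u m * (starRingEnd ℂ) (u m)) := by
  have hs : hankelSum γ s u = hankelSum γ s l :=
    Finset.sum_congr rfl fun i hi => Finset.sum_congr rfl fun j hj => by rw [hu i hi, hu j hj]
  simp only [hankelSum] at hs ⊢
  have hcross : ∑ i ∈ s, (γ (i + m) : ℂ) * u i * (starRingEnd ℂ) (u m)
      + ∑ j ∈ s, (γ (m + j) : ℂ) * u m * (starRingEnd ℂ) (u j)
      = ∑ i ∈ s, (γ (m + i) : ℂ) * (l i * (starRingEnd ℂ) (u m) + u m * (starRingEnd ℂ) (l i)) := by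
    rw [← Finset.sum_add_distrib]
    exact Finset.sum_congr rfl fun i hi => by rw [hu i hi, add_comm i m]; ring
  simp only [Finset.sum_insert hm, Finset.sum_add_distrib, ← hs, ← hcross]
  ring

lemma IsCPDSeq.isPDSeq_of_tendsto_zero {δ : ℕ → ℝ} (hc : IsCPDSeq δ)
    (h0 : Tendsto δ atTop (𝓝 0)) : IsPDSeq δ := by
  intro k l
  set s := Finset.range (k + 1)
  set c := -∑ i ∈ s, l i
  let u : ℕ → ℕ → ℂ := fun m i => if i ∈ s then l i else if i = m then c else 0
  have hsupp : ∀ m, ∀ i ∈ Finset.range (m + 1), i ∉ insert m s → u m i = 0 :=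
    fun m i _ hi => by simp_all [u]
  have hsub : ∀ m, k < m → insert m s ⊆ Finset.range (m + 1) := fun m hm => by
    intro i; simp [s]; omega
  have hms : ∀ m, k < m → m ∉ s := fun m hm => by simp [s]; omega
  have hum : ∀ m, k < m → u m m = c := fun m hm => by simp [u, hms m hm]
  have hsum : ∀ m, k < m → ∑ i ∈ Finset.range (m + 1), u m i = 0 := fun m hm => by
    rw [← Finset.sum_subset (hsub m hm) (hsupp m), Finset.sum_insert (hms m hm), hum m hm,
      Finset.sum_congr rfl fun i hi => if_pos hi]
    exact neg_add_cancel _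
  set F : ℕ → ℂ := fun m => hankelSum δ s l
      + ∑ i ∈ s, (δ (m + i) : ℂ) * (l i * (starRingEnd ℂ) c + c * (starRingEnd ℂ) (l i))
      + (δ (m + m) : ℂ) * (c * (starRingEnd ℂ) c)
  have hform : ∀ m, k < m → hankelSum δ (Finset.range (m + 1)) (u m) = F m := fun m hm => by
    rw [hankelSum_of_subset (hsub m hm) (hsupp m),
      hankelSum_insert (u := u m) (hms m hm) fun i hi => if_pos hi, hum m hm]
  have hδ : Tendsto (fun n => (δ n : ℂ)) atTop (𝓝 0) := by simpa using h0.ofReal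
  have hlim : Tendsto F atTop (𝓝 (hankelSum δ s l)) := by
    have hshift : ∀ i, Tendsto (fun m => (δ (m + i) : ℂ)) atTop (𝓝 0) := fun i =>
      (tendsto_add_atTop_iff_nat i).2 hδ
    have hdiag : Tendsto (fun m => (δ (m + m) : ℂ)) atTop (𝓝 0) :=
      hδ.comp (tendsto_atTop_mono (fun _ => le_add_self) tendsto_id)
    simpa using (tendsto_const_nhds.add (tendsto_finsetSum s fun i _ =>
      (hshift i).mul_const _)).add (hdiag.mul_const _)
  refine ge_of_tendsto hlim ((eventually_gt_atTop k).mono fun m hm => ?_)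
  rw [← hform m hm]
  exact hc m (u m) (hsum m hm)

lemma rootSeq_nonneg (γ : ℕ → ℝ) (n : ℕ) : 0 ≤ rootSeq γ n :=
  Real.rpow_nonneg (abs_nonneg _) _

lemma rootSeq_pow (γ : ℕ → ℝ) {n : ℕ} (hn : n ≠ 0) : rootSeq γ n ^ n = |γ n| := by
  rw [rootSeq, one_div, Real.rpow_inv_natCast_pow (abs_nonneg _) hn]

lemma tendsto_geom_mul_zero {γ : ℕ → ℝ} (hg : FiniteExpGrowth γ) {θ : ℝ}
    (hθ : |θ| * limsupRoot γ < 1) : Tendsto (fun n => θ ^ n * γ n) atTop (𝓝 0) := by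
  have hρ : ∀ᶠ ρ in 𝓝[>] limsupRoot γ, |θ| * ρ < 1 :=
    nhdsWithin_le_nhds <| (continuous_const_mul |θ|).continuousAt.eventually_lt
      continuousAt_const hθ
  obtain ⟨ρ, hθρ, hLρ⟩ := (hρ.and self_mem_nhdsWithin).exists
  have hroot : ∀ᶠ n in atTop, rootSeq γ n < ρ := eventually_lt_of_limsup_lt hLρ hg
  obtain ⟨n₀, hn₀⟩ := hroot.exists
  have hρ0 : 0 ≤ ρ := (rootSeq_nonneg γ n₀).trans hn₀.le
  refine squeeze_zero_norm' ?_ (tendsto_pow_atTop_nhds_zero_of_lt_one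
    (mul_nonneg (abs_nonneg θ) hρ0) hθρ)
  filter_upwards [hroot, eventually_ne_atTop 0] with n hn hn0
  calc ‖θ ^ n * γ n‖ = |θ| ^ n * rootSeq γ n ^ n := by
        rw [rootSeq_pow γ hn0, Real.norm_eq_abs, abs_mul, abs_pow]
    _ ≤ |θ| ^ n * ρ ^ n := by
        gcongr
        exact rootSeq_nonneg γ n
    _ = (|θ| * ρ) ^ n := (mul_pow _ _ n).symm

/-- Theorem `Gyeon`: for a real sequence `γ` with `limsup |γ_n|^{1/n} < ∞` the following are
equivalent: (i) `γ` is PD; (ii) `{θⁿ γ_n}ₙ` is CPD for every `θ ∈ ℝ`; (iii) `0` is an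
accumulation point of the set of `θ ∈ ℝ \ {0}` for which `{θⁿ γ_n}ₙ` is CPD; (iv) there is
`θ ∈ ℝ \ {0}` with `|θ| · limsup |γ_n|^{1/n} < 1` such that `{θⁿ γ_n}ₙ` is CPD. -/
theorem pd_iff_scaled_cpd (γ : ℕ → ℝ) (hg : FiniteExpGrowth γ) :
    (IsPDSeq γ ↔ ∀ θ : ℝ, IsCPDSeq fun n => θ ^ n * γ n) ∧
    ((∀ θ : ℝ, IsCPDSeq fun n => θ ^ n * γ n) ↔
      (0 : ℝ) ∈ closure {θ : ℝ | θ ≠ 0 ∧ IsCPDSeq fun n => θ ^ n * γ n}) ∧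
    ((0 : ℝ) ∈ closure {θ : ℝ | θ ≠ 0 ∧ IsCPDSeq fun n => θ ^ n * γ n} ↔
      ∃ θ : ℝ, θ ≠ 0 ∧ |θ| * limsupRoot γ < 1 ∧ IsCPDSeq fun n => θ ^ n * γ n) := by
  have key : List.TFAE [IsPDSeq γ, ∀ θ : ℝ, IsCPDSeq fun n => θ ^ n * γ n,
      (0 : ℝ) ∈ closure {θ : ℝ | θ ≠ 0 ∧ IsCPDSeq fun n => θ ^ n * γ n},
      ∃ θ : ℝ, θ ≠ 0 ∧ |θ| * limsupRoot γ < 1 ∧ IsCPDSeq fun n => θ ^ n * γ n] := by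
    tfae_have 1 → 2 := fun h θ => (h.geom_mul θ).isCPDSeq
    tfae_have 2 → 3 := fun h => by
      have h0 : (0 : ℝ) ∈ closure {0}ᶜ := by simp
      refine closure_mono (fun θ hθ => ?_) h0
      exact ⟨hθ, h θ⟩
    tfae_have 3 → 4 := fun h => by
      have hU : ∀ᶠ θ in 𝓝 (0 : ℝ), |θ| * limsupRoot γ < 1 :=
        (continuous_abs.mul continuous_const).continuousAt.eventually_lt continuousAt_const
          (by simp)
      obtain ⟨θ, hθU, hθ0, hθ⟩ := mem_closure_iff_nhds.mp h _ hU
      exact ⟨θ, hθ0, hθU, hθ⟩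
    tfae_have 4 → 1
    | ⟨θ, hθ0, hθ, hc⟩ =>
      (hc.isPDSeq_of_tendsto_zero (tendsto_geom_mul_zero hg hθ)).of_geom_mul hθ0
    tfae_finish
  exact ⟨key.out 0 1, key.out 1 2, key.out 2 3⟩

end
end

section
/- Let {γ_n}_{n≥0} be a CPD sequence with limsup_{n→∞} |γ_n|^{1/n} < ∞ and representing triplet (b, c, ν). Suppose supp ν ⊆ [0,∞) and γ_n ≥ 0 for all sufficiently large n. Then the following are equivalent: (i) lim_{n→∞}(γ_{n+1} − γ_n) = 0; (ii) the sequence {γ_n} is monotonically decreasing; (iii) the sequence {γ_n} converges in ℝ. Moreover, if (i) holds, then {γ_n} is PD and γ_n ≥ 0 for all n ∈ ℤ₊. -/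
open MeasureTheory Filter Topology
open scoped ComplexOrder

noncomputable section

/-! The representation gives `Δ²γₙ = 2c + ∫ xⁿ dν ≥ 0`, so `Δγ` is nondecreasing; with
`γₙ ≥ 0` for large `n` this makes (i) ⇒ (ii) ⇒ (iii) ⇒ (i) elementary. Under (i),
`Δγₙ ≥ Δγ₀ + 2cn` forces `c = 0`, so `r = γ - L` (with `L = lim γ ≥ 0`) satisfies
`Δ²rₙ = ∫ xⁿ dν` and `r, Δr → 0`. Summing twice,
`rₙ = ∑ₚ ∑_q ∫ x^(n+p+q) dν = ∫ xⁿ dν / (1 - x)²`, so `γₙ = L + ∫ xⁿ dμ` is the sum of a nonnegative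
constant and a moment sequence, both positive definite. -/

open Finset in
theorem Qpoly_succ_sub_Qpoly (n : ℕ) (x : ℝ) :
    Qpoly (n + 1) x - Qpoly n x = ∑ j ∈ range n, x ^ j := by
  rcases n with _ | n
  · simp [Qpoly]
  · rw [Qpoly, Qpoly, Nat.add_sub_cancel, Nat.add_sub_cancel, sum_range_succ,
      sum_range_succ, add_sub_right_comm, ← sum_sub_distrib]
    push_cast
    congr 1
    · exact sum_congr rfl fun j _ => by ring
    · ring

theorem measSupport_eq_support (ν : Measure ℝ) : measSupport ν = ν.support := by
  ext x
  rw [(nhds_basis_opens x).mem_measureSupport]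
  simp only [measSupport, Set.mem_ofPred_eq, pos_iff_ne_zero, and_imp]
  exact forall_congr' fun _ => forall_comm

theorem Continuous.integrable_of_measure_compl_eq_zero {X E : Type*} [MeasurableSpace X]
    [TopologicalSpace X] [OpensMeasurableSpace X] [T2Space X] [NormedAddCommGroup E] {μ : Measure X}
    [IsFiniteMeasureOnCompacts μ] {f : X → E} (hf : Continuous f) {K : Set X} (hK : IsCompact K)
    (hK0 : μ Kᶜ = 0) : Integrable f μ := by
  have hμK : μ.restrict K = μ := Measure.restrict_eq_self_of_ae_mem (mem_ae_iff.2 hK0)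
  simpa [IntegrableOn, hμK] using hf.continuousOn.integrableOn_compact (μ := μ) hK

theorem IsRepTriplet.integrable {γ : ℕ → ℝ} {b c : ℝ} {ν : Measure ℝ}
    (hrep : IsRepTriplet γ b c ν) {f : ℝ → ℝ} (hf : Continuous f) : Integrable f ν := by
  obtain ⟨-, hfin, ⟨K, hK, hK0⟩, -⟩ := hrep
  exact hf.integrable_of_measure_compl_eq_zero hK hK0

theorem IsRepTriplet.deltaSeq_deltaSeq {γ : ℕ → ℝ} {b c : ℝ} {ν : Measure ℝ}
    (hrep : IsRepTriplet γ b c ν) (n : ℕ) :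
    deltaSeq (deltaSeq γ) n = 2 * c + ∫ x, x ^ n ∂ν := by
  have hQ (m : ℕ) : Integrable (Qpoly m) ν :=
    hrep.integrable (continuous_finsetSum _ fun _ _ => by fun_prop)
  have hpow : (fun x : ℝ => x ^ n) =
      fun x => (Qpoly (n + 2) x - Qpoly (n + 1) x) - (Qpoly (n + 1) x - Qpoly n x) := by
    ext x
    rw [Qpoly_succ_sub_Qpoly, Qpoly_succ_sub_Qpoly, Finset.sum_range_succ, add_sub_cancel_left]
  rw [hpow, integral_sub (by exact (hQ _).sub (hQ _)) (by exact (hQ _).sub (hQ _)),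
    integral_sub (hQ _) (hQ _), integral_sub (hQ _) (hQ _)]
  simp only [deltaSeq, hrep.2.2.2.2 (n + 1 + 1), hrep.2.2.2.2 (n + 1), hrep.2.2.2.2 n]
  push_cast
  ring

theorem deltaSeq_sub_const (d : ℕ → ℝ) (L : ℝ) : deltaSeq (fun n => d n - L) = deltaSeq d := by
  ext n
  simp only [deltaSeq]
  ring

theorem deltaSeq_neg (d : ℕ → ℝ) : deltaSeq (-d) = -deltaSeq d := by
  ext n
  simp only [deltaSeq, Pi.neg_apply]
  ring

theorem monotone_of_deltaSeq_nonneg {d : ℕ → ℝ} (h : ∀ n, 0 ≤ deltaSeq d n) : Monotone d :=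
  monotone_nat_of_le_succ fun n => sub_nonneg.1 (h n)

theorem antitone_of_tendsto_deltaSeq_zero {γ : ℕ → ℝ} (hΔ : Monotone (deltaSeq γ))
    (h : Tendsto (deltaSeq γ) atTop (𝓝 0)) : Antitone γ :=
  antitone_nat_of_succ_le fun n =>
    sub_nonpos.1 <| ge_of_tendsto h <| eventually_atTop.2 ⟨n, fun _ hm => hΔ hm⟩

theorem tendsto_deltaSeq_zero {γ : ℕ → ℝ} {L : ℝ} (h : Tendsto γ atTop (𝓝 L)) :
    Tendsto (deltaSeq γ) atTop (𝓝 0) := by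
  have := (h.comp (tendsto_add_atTop_nat 1)).sub h
  rwa [sub_self] at this

theorem Antitone.nonneg_of_eventually_nonneg {γ : ℕ → ℝ} (hγ : Antitone γ)
    (hpos : ∀ᶠ n in atTop, 0 ≤ γ n) (n : ℕ) : 0 ≤ γ n :=
  let ⟨_, hm, hmn⟩ := (hpos.and (eventually_ge_atTop n)).exists
  hm.trans (hγ hmn)

theorem nonpos_of_le_deltaSeq_of_tendsto {d : ℕ → ℝ} {c L : ℝ} (hc : ∀ n, c ≤ deltaSeq d n)
    (hd : Tendsto d atTop (𝓝 L)) : c ≤ 0 := by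
  by_contra! hc0
  have hlin (n : ℕ) : d 0 + n * c ≤ d n := by
    induction n with
    | zero => simp
    | succ n ih => push_cast; linarith [hc n, show deltaSeq d n = d (n + 1) - d n from rfl]
  have htop : Tendsto (fun n : ℕ => d 0 + n * c) atTop atTop :=
    tendsto_atTop_add_const_left _ _ (tendsto_natCast_atTop_atTop.atTop_mul_const hc0)
  exact not_tendsto_atTop_of_tendsto_nhds hd (tendsto_atTop_mono hlin htop)

theorem tsum_ofReal_neg_deltaSeq {u : ℕ → ℝ} (hu : Antitone u) (hlim : Tendsto u atTop (𝓝 0))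
    (m : ℕ) : ∑' q, ENNReal.ofReal (-deltaSeq u (m + q)) = ENNReal.ofReal (u m) := by
  have hnonneg (q : ℕ) : 0 ≤ -deltaSeq u (m + q) :=
    neg_nonneg.2 (sub_nonpos.2 (hu (Nat.le_succ _)))
  have hpartial (N : ℕ) : ∑ q ∈ Finset.range N, -deltaSeq u (m + q) = u m - u (m + N) := by
    simpa [deltaSeq, add_assoc] using Finset.sum_range_sub' (fun q => u (m + q)) N
  have hsum : HasSum (fun q => -deltaSeq u (m + q)) (u m) := by
    rw [hasSum_iff_tendsto_nat_of_nonneg hnonneg]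
    simp_rw [hpartial, add_comm m]
    simpa using (tendsto_const_nhds (x := u m)).sub ((tendsto_add_atTop_iff_nat m).2 hlim)
  rw [← hsum.tsum_eq, ENNReal.ofReal_tsum_of_nonneg hnonneg hsum.summable]

def geomDensity (x : ℝ) : ENNReal := ∑' p, ENNReal.ofReal (x ^ p)

theorem lintegral_pow_withDensity_geomDensity {ρ : Measure ℝ} (hρ : ∀ᵐ x ∂ρ, 0 ≤ x) (n : ℕ) :
    ∫⁻ x, ENNReal.ofReal (x ^ n) ∂ρ.withDensity geomDensity =
      ∑' p, ∫⁻ x, ENNReal.ofReal (x ^ (n + p)) ∂ρ := by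
  rw [lintegral_withDensity_eq_lintegral_mul _ (by unfold geomDensity; fun_prop) (by fun_prop),
    ← lintegral_tsum fun p => by fun_prop]
  refine lintegral_congr_ae (hρ.mono fun x hx => ?_)
  rw [Pi.mul_apply, geomDensity, ← ENNReal.tsum_mul_right]
  refine tsum_congr fun p => ?_
  rw [← ENNReal.ofReal_mul (pow_nonneg hx _), ← pow_add, add_comm]

/-- The witness is `μ = ν / (1 - x)²` (`geomDensity` applied twice), whose moments
`∑ₚ ∑_q ∫ x^(n+p+q) dν` telescope to `r n`. -/
theorem exists_moment_measure_of_deltaSeq_deltaSeq {ν : Measure ℝ} (hν : ∀ᵐ x ∂ν, 0 ≤ x)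
    (hint : ∀ n, Integrable (fun x : ℝ => x ^ n) ν) {r : ℕ → ℝ} (hr : Tendsto r atTop (𝓝 0))
    (hΔr : Tendsto (deltaSeq r) atTop (𝓝 0))
    (hΔΔr : ∀ n, deltaSeq (deltaSeq r) n = ∫ x, x ^ n ∂ν) :
    ∃ μ : Measure ℝ, (∀ n, Integrable (fun x : ℝ => x ^ n) μ) ∧ ∀ n, r n = ∫ x, x ^ n ∂μ := by
  set μ₁ := ν.withDensity geomDensity with hμ₁_def
  set μ := μ₁.withDensity geomDensity with hμ_def
  have hμ₁ : ∀ᵐ x ∂μ₁, 0 ≤ x := (withDensity_absolutelyContinuous _ _).ae_le hν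
  have hμ : ∀ᵐ x ∂μ, 0 ≤ x := (withDensity_absolutelyContinuous _ _).ae_le hμ₁
  have hmoment (k : ℕ) : ∫⁻ x, ENNReal.ofReal (x ^ k) ∂ν =
      ENNReal.ofReal (-deltaSeq (-deltaSeq r) k) := by
    rw [deltaSeq_neg, Pi.neg_apply, neg_neg, hΔΔr,
      ofReal_integral_eq_lintegral_ofReal (hint k) (hν.mono fun x hx => pow_nonneg hx k)]
  have hΔr_mono : Monotone (deltaSeq r) := monotone_of_deltaSeq_nonneg fun n =>
    hΔΔr n ▸ integral_nonneg_of_ae (hν.mono fun x hx => pow_nonneg hx n)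
  have hr_anti : Antitone r := antitone_of_tendsto_deltaSeq_zero hΔr_mono hΔr
  have hlint (n : ℕ) : ∫⁻ x, ENNReal.ofReal (x ^ n) ∂μ = ENNReal.ofReal (r n) := by
    calc ∫⁻ x, ENNReal.ofReal (x ^ n) ∂μ
        = ∑' p, ∑' q, ∫⁻ x, ENNReal.ofReal (x ^ (n + p + q)) ∂ν := by
          simp_rw [hμ_def, lintegral_pow_withDensity_geomDensity hμ₁, hμ₁_def,
            lintegral_pow_withDensity_geomDensity hν]
      _ = ∑' p, ENNReal.ofReal (-deltaSeq r (n + p)) := by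
          simp_rw [hmoment]
          exact tsum_congr fun p => tsum_ofReal_neg_deltaSeq (u := -deltaSeq r) hΔr_mono.neg
            (neg_zero (G := ℝ) ▸ hΔr.neg) (n + p)
      _ = ENNReal.ofReal (r n) := tsum_ofReal_neg_deltaSeq hr_anti hr n
  refine ⟨μ, fun n => ⟨(continuous_pow n).aestronglyMeasurable, ?_⟩, fun n => ?_⟩
  · rw [hasFiniteIntegral_iff_ofReal (hμ.mono fun x hx => pow_nonneg hx n), hlint n]
    exact ENNReal.ofReal_lt_top
  · rw [integral_eq_lintegral_of_nonneg_ae (hμ.mono fun x hx => pow_nonneg hx n)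
      (continuous_pow n).aestronglyMeasurable, hlint n,
      ENNReal.toReal_ofReal (hr_anti.le_of_tendsto hr n)]

theorem IsPDSeq.add {γ δ : ℕ → ℝ} (hγ : IsPDSeq γ) (hδ : IsPDSeq δ) : IsPDSeq (γ + δ) := by
  intro k l
  simpa only [Pi.add_apply, Complex.ofReal_add, add_mul, Finset.sum_add_distrib] using
    add_nonneg (hγ k l) (hδ k l)

theorem isPDSeq_const {L : ℝ} (hL : 0 ≤ L) : IsPDSeq fun _ => L := by
  intro k l
  have hform : ∑ i ∈ Finset.range (k + 1), ∑ j ∈ Finset.range (k + 1),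
      (L : ℂ) * l i * (starRingEnd ℂ) (l j) =
        ((L * Complex.normSq (∑ i ∈ Finset.range (k + 1), l i) : ℝ) : ℂ) := by
    rw [Complex.ofReal_mul, ← Complex.mul_conj, map_sum, Finset.sum_mul_sum]
    simp only [Finset.mul_sum, mul_assoc]
  rw [hform, Complex.zero_le_real]
  exact mul_nonneg hL (Complex.normSq_nonneg _)

theorem isPDSeq_moment {μ : Measure ℝ} (hint : ∀ n, Integrable (fun x : ℝ => x ^ n) μ) :
    IsPDSeq fun n => ∫ x, x ^ n ∂μ := by
  intro k l
  set F : ℝ → ℂ := fun x => ∑ i ∈ Finset.range (k + 1), l i * (x : ℂ) ^ i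
  have hterm (i j : ℕ) : ((∫ x, x ^ (i + j) ∂μ : ℝ) : ℂ) * l i * (starRingEnd ℂ) (l j) =
      ∫ x, ((x ^ (i + j) : ℝ) : ℂ) * (l i * (starRingEnd ℂ) (l j)) ∂μ := by
    rw [integral_mul_const, integral_complex_ofReal, mul_assoc]
  have hint' (i j : ℕ) :
      Integrable (fun x : ℝ => ((x ^ (i + j) : ℝ) : ℂ) * (l i * (starRingEnd ℂ) (l j))) μ :=
    (hint (i + j)).ofReal.mul_const _
  have hform : ∑ i ∈ Finset.range (k + 1), ∑ j ∈ Finset.range (k + 1),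
      ((∫ x, x ^ (i + j) ∂μ : ℝ) : ℂ) * l i * (starRingEnd ℂ) (l j) =
        ((∫ x, Complex.normSq (F x) ∂μ : ℝ) : ℂ) := by
    have hinner (i : ℕ) := (integral_finsetSum (Finset.range (k + 1)) fun j _ => hint' i j).symm
    simp_rw [hterm, hinner]
    rw [← integral_finsetSum _ fun i _ => integrable_finsetSum _ fun j _ => hint' i j,
      ← integral_complex_ofReal]
    congr 1
    ext x
    rw [← Complex.mul_conj, map_sum, Finset.sum_mul_sum]
    refine Finset.sum_congr rfl fun i _ => Finset.sum_congr rfl fun j _ => ?_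
    simp only [map_mul, map_pow, Complex.conj_ofReal]
    push_cast
    ring
  rw [hform, Complex.zero_le_real]
  exact integral_nonneg fun x => Complex.normSq_nonneg _

theorem convergent_cpd_is_pd_general (γ : ℕ → ℝ)
    (b c : ℝ) (ν : Measure ℝ) (hrep : IsRepTriplet γ b c ν)
    (hsupp : measSupport ν ⊆ Set.Ici 0) (hpos : ∃ N : ℕ, ∀ n : ℕ, N ≤ n → 0 ≤ γ n) :
    ((Tendsto (deltaSeq γ) atTop (𝓝 0) ↔ Antitone γ) ∧
     (Antitone γ ↔ ∃ L : ℝ, Tendsto γ atTop (𝓝 L))) ∧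
    (Tendsto (deltaSeq γ) atTop (𝓝 0) → IsPDSeq γ ∧ ∀ n : ℕ, 0 ≤ γ n) := by
  have hν : ∀ᵐ x ∂ν, 0 ≤ x :=
    mem_of_superset Measure.support_mem_ae (measSupport_eq_support ν ▸ hsupp)
  have hint (n : ℕ) : Integrable (fun x : ℝ => x ^ n) ν := hrep.integrable (continuous_pow n)
  have hΔΔ (n : ℕ) : 2 * c ≤ deltaSeq (deltaSeq γ) n := by
    rw [hrep.deltaSeq_deltaSeq, le_add_iff_nonneg_right]
    exact integral_nonneg_of_ae (hν.mono fun x hx => pow_nonneg hx n)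
  have hΔ_mono : Monotone (deltaSeq γ) :=
    monotone_of_deltaSeq_nonneg fun n => (mul_nonneg zero_le_two hrep.1).trans (hΔΔ n)
  have hpos' : ∀ᶠ n in atTop, 0 ≤ γ n := eventually_atTop.2 hpos
  have hconv (hγ : Antitone γ) : ∃ L, Tendsto γ atTop (𝓝 L) :=
    ⟨_, tendsto_atTop_ciInf hγ ⟨0, Set.forall_mem_range.2 (hγ.nonneg_of_eventually_nonneg hpos')⟩⟩
  have hΔ_zero : (∃ L, Tendsto γ atTop (𝓝 L)) → Tendsto (deltaSeq γ) atTop (𝓝 0) :=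
    fun ⟨_, hL⟩ => tendsto_deltaSeq_zero hL
  have hanti := antitone_of_tendsto_deltaSeq_zero hΔ_mono
  refine ⟨⟨⟨hanti, fun h => hΔ_zero (hconv h)⟩, ⟨hconv, fun h => hanti (hΔ_zero h)⟩⟩, fun hΔ => ?_⟩
  have hγ_nonneg := (hanti hΔ).nonneg_of_eventually_nonneg hpos'
  obtain ⟨L, hL⟩ := hconv (hanti hΔ)
  have hc : c = 0 := le_antisymm (by linarith [nonpos_of_le_deltaSeq_of_tendsto hΔΔ hΔ]) hrep.1
  obtain ⟨μ, hμ_int, hμ⟩ := exists_moment_measure_of_deltaSeq_deltaSeq hν hint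
    (r := fun n => γ n - L) (by simpa using hL.sub_const L) (deltaSeq_sub_const γ L ▸ hΔ)
    (fun n => by rw [deltaSeq_sub_const, hrep.deltaSeq_deltaSeq, hc, mul_zero, zero_add])
  have hγ : γ = (fun _ => L) + fun n => ∫ x, x ^ n ∂μ := by
    ext n
    rw [Pi.add_apply, ← hμ n, add_sub_cancel]
  exact ⟨hγ ▸ (isPDSeq_const (ge_of_tendsto' hL hγ_nonneg)).add (isPDSeq_moment hμ_int),
    hγ_nonneg⟩

/-- Corollary `pd2cpd`: let `γ` be a CPD sequence of at most exponential growth with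
representing triplet `(b, c, ν)` such that `supp ν ⊆ [0, ∞)` and `γ_n ≥ 0` for all large `n`.
Then the following are equivalent: (i) `(Δγ)_n → 0`; (ii) `γ` is monotonically decreasing;
(iii) `γ` converges in `ℝ`.  Moreover, if (i) holds, then `γ` is PD and `γ_n ≥ 0` for all
`n`. -/
theorem convergent_cpd_is_pd (γ : ℕ → ℝ) (hcpd : IsCPDSeq γ) (hg : FiniteExpGrowth γ)
    (b c : ℝ) (ν : Measure ℝ) (hrep : IsRepTriplet γ b c ν)
    (hsupp : measSupport ν ⊆ Set.Ici 0) (hpos : ∃ N : ℕ, ∀ n : ℕ, N ≤ n → 0 ≤ γ n) :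
    ((Tendsto (deltaSeq γ) atTop (𝓝 0) ↔ Antitone γ) ∧
     (Antitone γ ↔ ∃ L : ℝ, Tendsto γ atTop (𝓝 L))) ∧
    (Tendsto (deltaSeq γ) atTop (𝓝 0) → IsPDSeq γ ∧ ∀ n : ℕ, 0 ≤ γ n) :=
  convergent_cpd_is_pd_general γ b c ν hrep hsupp hpos

end
end

section
/- Let H be a complex Hilbert space and T ∈ B(H) a CPD operator. The following are equivalent: (i) the sequence {T^{*(n+1)}T^{n+1} − T^{*n}Tⁿ}_{n≥0} converges in the weak operator topology; (ii) sup_{n∈ℤ₊} ‖T^{*(n+1)}T^{n+1} − T^{*n}Tⁿ‖ < ∞; (iii) for every h ∈ H, sup_{n∈ℤ₊} (‖T^{n+1}h‖² − ‖Tⁿh‖²) < ∞. -/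
open MeasureTheory Filter Topology ContinuousLinearMap
open scoped ComplexOrder

noncomputable section

/-- The operator `B_m(T) = ∑_{k=0}^m (-1)^k (m choose k) T^{*k} Tᵏ`. -/
def bOp {H : Type*} [NormedAddCommGroup H] [InnerProductSpace ℂ H] [CompleteSpace H]
    (T : H →L[ℂ] H) (m : ℕ) : H →L[ℂ] H :=
  ∑ k ∈ Finset.range (m + 1),
    ((-1 : ℂ) ^ k * (m.choose k : ℂ)) • (adjoint (T ^ k) * T ^ k)

/-!
The CPD condition for `λ = (1, -1)`, applied at `Tⁿh`, says that the second difference of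
`n ↦ ‖Tⁿh‖²` is nonnegative, so the increments `⟪Sₙh, h⟫ = ‖Tⁿ⁺¹h‖² - ‖Tⁿh‖²` of the operators
`Sₙ = T*ⁿ⁺¹Tⁿ⁺¹ - T*ⁿTⁿ` increase with `n`. An increasing real sequence bounded above is bounded
and convergent. Polarization carries boundedness and convergence from the quadratic forms
`⟪Sₙh, h⟫` to all matrix coefficients `⟪Sₙf, g⟫`; Banach–Steinhaus turns weak boundedness into
norm boundedness, and a norm-bounded weak limit of operators is again an operator, by the Riesz
representation of bounded sesquilinear forms.
-/
open InnerProductSpace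

section WeakLimits

variable {𝕜 E : Type*} [RCLike 𝕜] [NormedAddCommGroup E] [InnerProductSpace 𝕜 E]
  [CompleteSpace E]

theorem exists_forall_norm_le_of_tendsto {F : Type*} [SeminormedAddCommGroup F] {u : ℕ → F}
    {x : F} (hu : Tendsto u atTop (𝓝 x)) : ∃ C, ∀ n, ‖u n‖ ≤ C :=
  (isBounded_iff_forall_norm_le.1 (Metric.isBounded_range_of_tendsto u hu)).imp
    fun _ hC n => hC _ ⟨n, rfl⟩

theorem banach_steinhaus_inner {ι : Type*} (S : ι → E →L[𝕜] E)
    (hS : ∀ f g, ∃ C, ∀ i, ‖⟪S i f, g⟫_𝕜‖ ≤ C) : ∃ C, ∀ i, ‖S i‖ ≤ C := by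
  refine banach_steinhaus fun f => ?_
  obtain ⟨C, hC⟩ := banach_steinhaus (g := fun i => innerSL 𝕜 (S i f)) fun g => by
    simpa using hS f g
  exact ⟨C, fun i => by simpa [innerSL_apply_norm] using hC i⟩

theorem exists_tendsto_inner_of_exists_tendsto_inner {S : ℕ → E →L[𝕜] E}
    (hS : ∀ f g, ∃ c, Tendsto (fun n => ⟪S n f, g⟫_𝕜) atTop (𝓝 c)) :
    ∃ D : E →L[𝕜] E, ∀ f g, Tendsto (fun n => ⟪S n f, g⟫_𝕜) atTop (𝓝 ⟪D f, g⟫_𝕜) := by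
  choose B hB using hS
  obtain ⟨C, hC⟩ := banach_steinhaus_inner S fun f g => exists_forall_norm_le_of_tendsto (hB f g)
  let form : E →ₗ⋆[𝕜] E →ₗ[𝕜] 𝕜 := LinearMap.mk₂'ₛₗ (starRingEnd 𝕜) (RingHom.id 𝕜) B
    (fun f₁ f₂ g => tendsto_nhds_unique
      (by simpa only [map_add, inner_add_left] using hB (f₁ + f₂) g) ((hB f₁ g).add (hB f₂ g)))
    (fun c f g => tendsto_nhds_unique
      (by simpa only [map_smul, inner_smul_left] using hB (c • f) g) ((hB f g).const_mul _))
    (fun f g₁ g₂ => tendsto_nhds_unique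
      (by simpa only [inner_add_right] using hB f (g₁ + g₂)) ((hB f g₁).add (hB f g₂)))
    (fun c f g => tendsto_nhds_unique
      (by simpa only [inner_smul_right] using hB f (c • g)) ((hB f g).const_mul c))
  have form_le : ∀ f g, ‖form f g‖ ≤ C * ‖f‖ * ‖g‖ := fun f g =>
    le_of_tendsto (hB f g).norm <| Eventually.of_forall fun n => calc
      ‖⟪S n f, g⟫_𝕜‖ ≤ ‖S n f‖ * ‖g‖ := norm_inner_le_norm _ _
      _ ≤ C * ‖f‖ * ‖g‖ := by gcongr; exact (S n).le_of_opNorm_le (hC n) f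
  refine ⟨continuousLinearMapOfBilin (form.mkContinuous₂ C form_le), fun f g => ?_⟩
  rw [continuousLinearMapOfBilin_apply]
  exact hB f g

end WeakLimits

section Polarization

variable {E ι : Type*} [NormedAddCommGroup E] [InnerProductSpace ℂ E]

theorem norm_inner_map_le_polarization (A : E →L[ℂ] E) (f g : E) :
    ‖⟪A f, g⟫_ℂ‖ ≤ (‖⟪A (g + f), g + f⟫_ℂ‖ + ‖⟪A (g - f), g - f⟫_ℂ‖ +
      ‖⟪A (g + Complex.I • f), g + Complex.I • f⟫_ℂ‖ +
      ‖⟪A (g - Complex.I • f), g - Complex.I • f⟫_ℂ‖) / 4 := by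
  rw [show ⟪A f, g⟫_ℂ = _ from inner_map_polarization (A : E →ₗ[ℂ] E) g f, norm_div]
  simp only [ContinuousLinearMap.coe_coe]
  have h₁ := norm_sub_le (⟪A (g + f), g + f⟫_ℂ - ⟪A (g - f), g - f⟫_ℂ +
    Complex.I * ⟪A (g + Complex.I • f), g + Complex.I • f⟫_ℂ)
    (Complex.I * ⟪A (g - Complex.I • f), g - Complex.I • f⟫_ℂ)
  have h₂ := norm_add_le (⟪A (g + f), g + f⟫_ℂ - ⟪A (g - f), g - f⟫_ℂ)
    (Complex.I * ⟪A (g + Complex.I • f), g + Complex.I • f⟫_ℂ)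
  have h₃ := norm_sub_le ⟪A (g + f), g + f⟫_ℂ ⟪A (g - f), g - f⟫_ℂ
  simp only [norm_mul, Complex.norm_I, one_mul] at h₁ h₂
  rw [Complex.norm_ofNat]
  linarith

theorem exists_norm_inner_le_of_exists_norm_inner_self_le (S : ι → E →L[ℂ] E)
    (hS : ∀ h, ∃ C, ∀ i, ‖⟪S i h, h⟫_ℂ‖ ≤ C) (f g : E) :
    ∃ C, ∀ i, ‖⟪S i f, g⟫_ℂ‖ ≤ C := by
  choose C hC using hS
  exact ⟨(C (g + f) + C (g - f) + C (g + Complex.I • f) + C (g - Complex.I • f)) / 4,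
    fun i => (norm_inner_map_le_polarization (S i) f g).trans (by gcongr <;> apply hC)⟩

theorem exists_tendsto_inner_of_exists_tendsto_inner_self {S : ι → E →L[ℂ] E} {l : Filter ι}
    (hS : ∀ h, ∃ c, Tendsto (fun i => ⟪S i h, h⟫_ℂ) l (𝓝 c)) (f g : E) :
    ∃ c, Tendsto (fun i => ⟪S i f, g⟫_ℂ) l (𝓝 c) := by
  choose c hc using hS
  exact ⟨_, (((((hc _).sub (hc _)).add ((hc _).const_mul _)).sub ((hc _).const_mul _)).div_const
    _).congr fun i => (inner_map_polarization (S i : E →ₗ[ℂ] E) g f).symm⟩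

end Polarization

theorem IsCPDSeq.second_diff_nonneg {γ : ℕ → ℝ} (hγ : IsCPDSeq γ) :
    0 ≤ γ 0 - 2 * γ 1 + γ 2 := by
  have h := hγ 1 (fun i => if i = 0 then 1 else -1) (by simp [Finset.sum_range_succ])
  simp only [Finset.sum_range_succ, Finset.sum_range_zero] at h
  norm_num at h
  exact Complex.zero_le_real.1 (by convert h using 1; push_cast; ring)

section GramPowDiff

variable {𝕜 H : Type*} [RCLike 𝕜] [NormedAddCommGroup H] [InnerProductSpace 𝕜 H]
  [CompleteSpace H]

theorem inner_adjoint_mul_self_apply_self (A : H →L[𝕜] H) (h : H) :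
    ⟪(adjoint A * A) h, h⟫_𝕜 = ((‖A h‖ ^ 2 : ℝ) : 𝕜) := by
  rw [mul_apply_eq_comp, adjoint_inner_left, inner_self_eq_norm_sq_to_K]
  norm_cast

def gramPowDiff (T : H →L[𝕜] H) (n : ℕ) : H →L[𝕜] H :=
  adjoint (T ^ (n + 1)) * T ^ (n + 1) - adjoint (T ^ n) * T ^ n

theorem inner_gramPowDiff_apply_self (T : H →L[𝕜] H) (n : ℕ) (h : H) :
    ⟪gramPowDiff T n h, h⟫_𝕜 = ((‖(T ^ (n + 1)) h‖ ^ 2 - ‖(T ^ n) h‖ ^ 2 : ℝ) : 𝕜) := by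
  rw [gramPowDiff, sub_apply, inner_sub_left, inner_adjoint_mul_self_apply_self,
    inner_adjoint_mul_self_apply_self, RCLike.ofReal_sub]

theorem norm_pow_succ_apply_sq_sub_le (T : H →L[𝕜] H) (n : ℕ) (h : H) :
    ‖(T ^ (n + 1)) h‖ ^ 2 - ‖(T ^ n) h‖ ^ 2 ≤ ‖gramPowDiff T n‖ * ‖h‖ ^ 2 := calc
  _ = RCLike.re ⟪gramPowDiff T n h, h⟫_𝕜 := by rw [inner_gramPowDiff_apply_self, RCLike.ofReal_re]
  _ ≤ ‖gramPowDiff T n h‖ * ‖h‖ := re_inner_le_norm _ _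
  _ ≤ ‖gramPowDiff T n‖ * ‖h‖ ^ 2 := by
    rw [sq, ← mul_assoc]; gcongr; exact le_opNorm _ _

end GramPowDiff

theorem Monotone.abs_le_max_neg_zero {u : ℕ → ℝ} (hu : Monotone u) {m : ℝ}
    (hm : ∀ n, u n ≤ m) (n : ℕ) : |u n| ≤ max m (-u 0) :=
  abs_le.2 ⟨by linarith [hu (Nat.zero_le n), le_max_right m (-u 0)],
    (hm n).trans (le_max_left _ _)⟩

section CPDOperator

variable {H : Type*} [NormedAddCommGroup H] [InnerProductSpace ℂ H] [CompleteSpace H]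
  {T : H →L[ℂ] H}

theorem IsCPDOp.monotone_norm_pow_succ_apply_sq_sub (hT : IsCPDOp T) (h : H) :
    Monotone fun n => ‖(T ^ (n + 1)) h‖ ^ 2 - ‖(T ^ n) h‖ ^ 2 := by
  refine monotone_nat_of_le_succ fun n => ?_
  have hpow : ∀ k, (T ^ k) ((T ^ n) h) = (T ^ (n + k)) h := fun k => by
    rw [← mul_apply_eq_comp, ← pow_add, add_comm]
  have := (hT ((T ^ n) h)).second_diff_nonneg
  simp only [hpow, add_zero] at this
  linarith

theorem IsCPDOp.exists_norm_inner_gramPowDiff_le (hT : IsCPDOp T)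
    (hbdd : ∀ h : H, ∃ m : ℝ, ∀ n, ‖(T ^ (n + 1)) h‖ ^ 2 - ‖(T ^ n) h‖ ^ 2 ≤ m) (h : H) :
    ∃ C, ∀ n, ‖⟪gramPowDiff T n h, h⟫_ℂ‖ ≤ C := by
  obtain ⟨m, hm⟩ := hbdd h
  simp only [inner_gramPowDiff_apply_self, RCLike.norm_ofReal]
  exact ⟨_, (hT.monotone_norm_pow_succ_apply_sq_sub h).abs_le_max_neg_zero hm⟩

theorem IsCPDOp.exists_tendsto_inner_gramPowDiff (hT : IsCPDOp T)
    (hbdd : ∀ h : H, ∃ m : ℝ, ∀ n, ‖(T ^ (n + 1)) h‖ ^ 2 - ‖(T ^ n) h‖ ^ 2 ≤ m) (h : H) :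
    ∃ c, Tendsto (fun n => ⟪gramPowDiff T n h, h⟫_ℂ) atTop (𝓝 c) := by
  obtain ⟨m, hm⟩ := hbdd h
  have hq := tendsto_atTop_ciSup (hT.monotone_norm_pow_succ_apply_sq_sub h)
    ⟨m, Set.forall_mem_range.2 hm⟩
  simp only [inner_gramPowDiff_apply_self]
  exact ⟨_, (RCLike.continuous_ofReal.tendsto _).comp hq⟩

end CPDOperator

/-- Proposition `unif-bund`: for a CPD operator `T` the following are equivalent:
(i) the sequence `{T^{*(n+1)}T^{n+1} - T^{*n}Tⁿ}ₙ` converges in the weak operator topology;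
(ii) `sup_n ‖T^{*(n+1)}T^{n+1} - T^{*n}Tⁿ‖ < ∞`;
(iii) `sup_n (‖T^{n+1}h‖² - ‖Tⁿh‖²) < ∞` for every `h ∈ H`. -/
theorem cpd_wot_convergence_iff_bounded {H : Type*} [NormedAddCommGroup H]
    [InnerProductSpace ℂ H] [CompleteSpace H] (T : H →L[ℂ] H) (hT : IsCPDOp T) :
    ((∃ D : H →L[ℂ] H, ∀ f g : H,
        Tendsto
          (fun n : ℕ =>
            @inner ℂ H _ ((adjoint (T ^ (n + 1)) * T ^ (n + 1) - adjoint (T ^ n) * T ^ n) f) g)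
          atTop (𝓝 (@inner ℂ H _ (D f) g))) ↔
      ∃ m : ℝ, ∀ n : ℕ,
        ‖adjoint (T ^ (n + 1)) * T ^ (n + 1) - adjoint (T ^ n) * T ^ n‖ ≤ m) ∧
    ((∃ m : ℝ, ∀ n : ℕ,
        ‖adjoint (T ^ (n + 1)) * T ^ (n + 1) - adjoint (T ^ n) * T ^ n‖ ≤ m) ↔
      ∀ h : H, ∃ m : ℝ, ∀ n : ℕ, ‖(T ^ (n + 1)) h‖ ^ 2 - ‖(T ^ n) h‖ ^ 2 ≤ m) := by
  have bounded_of_norm_bounded : (∃ m : ℝ, ∀ n, ‖gramPowDiff T n‖ ≤ m) →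
      ∀ h : H, ∃ m : ℝ, ∀ n : ℕ, ‖(T ^ (n + 1)) h‖ ^ 2 - ‖(T ^ n) h‖ ^ 2 ≤ m :=
    fun ⟨m, hm⟩ h => ⟨m * ‖h‖ ^ 2, fun n =>
      (norm_pow_succ_apply_sq_sub_le T n h).trans (by gcongr; exact hm n)⟩
  refine ⟨⟨fun ⟨D, hD⟩ => ?_, fun hm => ?_⟩, bounded_of_norm_bounded, fun hbdd => ?_⟩
  · exact banach_steinhaus_inner _ fun f g => exists_forall_norm_le_of_tendsto (hD f g)
  · exact exists_tendsto_inner_of_exists_tendsto_inner <|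
      exists_tendsto_inner_of_exists_tendsto_inner_self <|
        hT.exists_tendsto_inner_gramPowDiff (bounded_of_norm_bounded hm)
  · exact banach_steinhaus_inner _ <|
      exists_norm_inner_le_of_exists_norm_inner_self_le _ <|
        hT.exists_norm_inner_gramPowDiff_le hbdd

end
end

section
/- Let H be a complex Hilbert space and suppose T ∈ B(H) satisfies sup_{n∈ℤ₊} (‖T^{n+1}h‖² − ‖Tⁿh‖²) < ∞ for every h ∈ H. Then α_T(h) := sup_{n∈ℤ₊}(‖T^{n+1}h‖² − ‖Tⁿh‖²) ≥ 0 for every h ∈ H, and the spectral radius of T satisfies r(T) ≤ 1. -/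
/-!
Telescoping the increments gives `‖Tⁿh‖² ≤ ‖h‖² + n·m_h`. If `α_T(h)` were negative, the
same telescoping with `α_T(h)` in place of `m_h` would make `‖Tⁿh‖²` negative for large `n`.
The bound also gives `‖Tⁿh‖ = O(n)` for each `h`, hence `‖Tⁿ‖ = O(n)` by the uniform
boundedness principle, and Gelfand's formula yields `r(T) = lim ‖Tⁿ‖^{1/n} ≤ 1`.
-/

open Filter Topology ContinuousLinearMap

theorem le_add_mul_of_forall_sub_le {u : ℕ → ℝ} {m : ℝ} (h : ∀ n, u (n + 1) - u n ≤ m)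
    (N : ℕ) : u N ≤ u 0 + N * m := by
  induction N with
  | zero => simp
  | succ n ih => push_cast; linarith [h n]

theorem iSup_sub_nonneg_of_nonneg {u : ℕ → ℝ} (hu : ∀ n, 0 ≤ u n)
    (hbdd : BddAbove (Set.range fun n => u (n + 1) - u n)) :
    0 ≤ ⨆ n, (u (n + 1) - u n) := by
  set s := ⨆ n, (u (n + 1) - u n)
  by_contra! hs
  obtain ⟨N, hN⟩ := exists_nat_gt (u 0 / -s)
  have hgrowth := le_add_mul_of_forall_sub_le (fun n => le_ciSup hbdd n) N
  have hlarge : u 0 < N * -s := (div_lt_iff₀ (neg_pos.2 hs)).1 hN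
  linarith [hu N]

theorem exists_le_mul_add_one_of_sq_sub_le {v : ℕ → ℝ} {m : ℝ} (hv : ∀ n, 0 ≤ v n)
    (h : ∀ n, v (n + 1) ^ 2 - v n ^ 2 ≤ m) : ∃ C, ∀ n : ℕ, v n ≤ C * (n + 1) := by
  set K := v 0 ^ 2 + max m 0
  refine ⟨√K, fun n => ?_⟩
  have hK : 0 ≤ K := by positivity
  have hsq : v n ^ 2 ≤ ((n + 1) * √K) ^ 2 := calc
    v n ^ 2 ≤ v 0 ^ 2 + n * m := le_add_mul_of_forall_sub_le (u := fun n => v n ^ 2) h n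
    _ ≤ (n + 1) * K := by nlinarith [le_max_left m 0, le_max_right m 0, sq_nonneg (v 0)]
    _ ≤ (n + 1) ^ 2 * K := by
      rw [sq, mul_assoc]
      exact le_mul_of_one_le_left (by positivity) (by linarith [n.cast_nonneg (α := ℝ)])
    _ = ((n + 1) * √K) ^ 2 := by rw [mul_pow, Real.sq_sqrt hK]
  rw [mul_comm]
  exact (pow_le_pow_iff_left₀ (hv n) (by positivity) two_ne_zero).1 hsq

theorem exists_norm_le_mul_of_forall_norm_apply_le_mul {𝕜 E F ι : Type*} [RCLike 𝕜]
    [NormedAddCommGroup E] [NormedSpace 𝕜 E] [CompleteSpace E]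
    [NormedAddCommGroup F] [NormedSpace 𝕜 F] {g : ι → E →L[𝕜] F} {w : ι → ℝ}
    (hw : ∀ i, 0 < w i) (h : ∀ x, ∃ C, ∀ i, ‖g i x‖ ≤ C * w i) :
    ∃ C, ∀ i, ‖g i‖ ≤ C * w i := by
  have hscale : ∀ i, ‖(((w i)⁻¹ : ℝ) : 𝕜)‖ = (w i)⁻¹ := fun i => by
    rw [RCLike.norm_ofReal, abs_of_pos (inv_pos.2 (hw i))]
  obtain ⟨C, hC⟩ := banach_steinhaus (g := fun i => (((w i)⁻¹ : ℝ) : 𝕜) • g i) fun x => by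
    obtain ⟨C, hC⟩ := h x
    refine ⟨C, fun i => ?_⟩
    rw [smul_apply, norm_smul, hscale, inv_mul_le_iff₀ (hw i), mul_comm]
    exact hC i
  refine ⟨C, fun i => ?_⟩
  have := hC i
  rwa [norm_smul, hscale, inv_mul_le_iff₀ (hw i), mul_comm] at this

theorem tendsto_mul_add_one_rpow_one_div {C : ℝ} (hC : 0 < C) :
    Tendsto (fun n : ℕ => (C * (n + 1)) ^ (1 / n : ℝ)) atTop (𝓝 1) := by
  have hconst : Tendsto (fun n : ℕ => C ^ (1 / n : ℝ)) atTop (𝓝 1) := by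
    simpa using tendsto_const_nhds.rpow tendsto_one_div_atTop_nhds_zero_nat (Or.inl hC.ne')
  have hroot : Tendsto (fun n : ℕ => ((n : ℝ) + 1) ^ (1 / n : ℝ)) atTop (𝓝 1) := by
    refine ((tendsto_rpow_div_mul_add 1 1 (-1) one_ne_zero.symm).comp
      (tendsto_atTop_add_const_right _ 1 tendsto_natCast_atTop_atTop)).congr fun n => ?_
    simp
  simpa only [one_mul] using (hconst.mul hroot).congr fun n =>
    (Real.mul_rpow hC.le (by positivity)).symm

theorem spectralRadius_le_one_of_norm_pow_le_mul {A : Type*} [NormedRing A] [NormedAlgebra ℂ A]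
    [CompleteSpace A] (a : A) {C : ℝ} (h : ∀ n : ℕ, ‖a ^ n‖ ≤ C * (n + 1)) :
    spectralRadius ℂ a ≤ 1 := by
  have hbound : ∀ n : ℕ, ‖a ^ n‖ ≤ max C 1 * (n + 1) := fun n =>
    (h n).trans (by gcongr; exact le_max_left C 1)
  have hlim := ENNReal.tendsto_ofReal (tendsto_mul_add_one_rpow_one_div
    (lt_of_lt_of_le one_pos (le_max_right C 1)))
  rw [ENNReal.ofReal_one] at hlim
  exact le_of_tendsto_of_tendsto' (spectrum.pow_norm_pow_one_div_tendsto_nhds_spectralRadius a)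
    hlim fun n => ENNReal.ofReal_le_ofReal
      (Real.rpow_le_rpow (norm_nonneg _) (hbound n) (by positivity))

/-- Proposition `zen-jesz-nie`: if `T ∈ B(H)` satisfies
`sup_n (‖T^{n+1}h‖² - ‖Tⁿh‖²) < ∞` for every `h ∈ H`, then
`α_T(h) := sup_n (‖T^{n+1}h‖² - ‖Tⁿh‖²) ≥ 0` for every `h` and `r(T) ≤ 1`. -/
theorem sup_nonneg_and_spectralRadius_le_one {H : Type*} [NormedAddCommGroup H]
    [InnerProductSpace ℂ H] [CompleteSpace H] (T : H →L[ℂ] H)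
    (hb : ∀ h : H, ∃ m : ℝ, ∀ n : ℕ, ‖(T ^ (n + 1)) h‖ ^ 2 - ‖(T ^ n) h‖ ^ 2 ≤ m) :
    (∀ h : H, 0 ≤ ⨆ n : ℕ, (‖(T ^ (n + 1)) h‖ ^ 2 - ‖(T ^ n) h‖ ^ 2)) ∧
      spectralRadius ℂ T ≤ 1 := by
  refine ⟨fun h => ?_, ?_⟩
  · obtain ⟨m, hm⟩ := hb h
    exact iSup_sub_nonneg_of_nonneg (u := fun n => ‖(T ^ n) h‖ ^ 2) (fun n => sq_nonneg _)
      ⟨m, Set.forall_mem_range.2 hm⟩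
  · have hpointwise : ∀ h : H, ∃ C, ∀ n : ℕ, ‖(T ^ n) h‖ ≤ C * (n + 1) := fun h =>
      let ⟨_, hm⟩ := hb h
      exists_le_mul_add_one_of_sq_sub_le (fun _ => norm_nonneg _) hm
    obtain ⟨C, hC⟩ := exists_norm_le_mul_of_forall_norm_apply_le_mul
      (g := fun n : ℕ => T ^ n) (w := fun n : ℕ => (n : ℝ) + 1) (fun n => by positivity)
      hpointwise
    exact spectralRadius_le_one_of_norm_pow_le_mul T hC
end

section
/- Let H be a complex Hilbert space, let T ∈ B(H) be a CPD operator, and let i be a positive integer. Then the power Tⁱ is also CPD. -/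
open MeasureTheory Filter Topology ContinuousLinearMap
open scoped ComplexOrder

noncomputable section

/-- Summing a function supported on multiples of `i` over `range (i*k+1)` is the same as
summing its values at multiples over `range (k+1)`. -/
lemma sum_dilate {i : ℕ} (hi : 0 < i) (k : ℕ) (f : ℕ → ℂ) :
    ∑ m ∈ Finset.range (i * k + 1), (if i ∣ m then f (m / i) else 0)
      = ∑ a ∈ Finset.range (k + 1), f a := by
  have hinj : ∀ a ∈ Finset.range (k + 1), ∀ b ∈ Finset.range (k + 1),
      i * a = i * b → a = b := by
    intro a _ b _ h
    exact Nat.eq_of_mul_eq_mul_left hi h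
  have himg : ∑ m ∈ (Finset.range (k + 1)).image (fun a => i * a),
      (if i ∣ m then f (m / i) else 0) = ∑ a ∈ Finset.range (k + 1), f a := by
    rw [Finset.sum_image hinj]
    refine Finset.sum_congr rfl fun a _ => ?_
    rw [if_pos (dvd_mul_right i a), Nat.mul_div_cancel_left a hi]
  rw [← himg]
  refine (Finset.sum_subset ?_ ?_).symm
  · intro m hm
    simp only [Finset.mem_image, Finset.mem_range] at hm ⊢
    obtain ⟨a, ha, rfl⟩ := hm
    have : i * a ≤ i * k := Nat.mul_le_mul_left i (Nat.lt_succ_iff.mp ha)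
    omega
  · intro m hm hnm
    simp only [Finset.mem_image, Finset.mem_range] at hm hnm
    rw [if_neg]
    intro hdvd
    refine hnm ⟨m / i, ?_, Nat.mul_div_cancel' hdvd⟩
    have h1 : m / i ≤ (i * k) / i := Nat.div_le_div_right (Nat.lt_succ_iff.mp hm)
    rw [Nat.mul_div_cancel_left k hi] at h1
    omega

set_option maxHeartbeats 1000000 in
/-- Theorem `pow-dwa`(i): if `T ∈ B(H)` is CPD and `i` is a positive integer, then `Tⁱ` is
CPD. -/
theorem pow_of_cpd_isCPD {H : Type*} [NormedAddCommGroup H] [InnerProductSpace ℂ H]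
    [CompleteSpace H] (T : H →L[ℂ] H) (hT : IsCPDOp T) (i : ℕ) (hi : 1 ≤ i) :
    IsCPDOp (T ^ i) := by
  intro h k l hl
  have hipos : 0 < i := hi
  set γ : ℕ → ℝ := fun n => ‖(T ^ n) h‖ ^ 2 with hγ
  set l' : ℕ → ℂ := fun m => if i ∣ m then l (m / i) else 0 with hl'def
  have hsum : ∑ m ∈ Finset.range (i * k + 1), l' m = 0 := by
    rw [hl'def]
    rw [sum_dilate hipos k l]
    exact hl
  have key := hT h (i * k) l' hsum
  refine le_trans key (le_of_eq ?_)
  calc ∑ m ∈ Finset.range (i * k + 1), ∑ n ∈ Finset.range (i * k + 1),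
        (γ (m + n) : ℂ) * l' m * (starRingEnd ℂ) (l' n)
      = ∑ m ∈ Finset.range (i * k + 1),
          (if i ∣ m then (∑ n ∈ Finset.range (i * k + 1),
            (γ (i * (m / i) + n) : ℂ) * l (m / i) * (starRingEnd ℂ) (l' n)) else 0) := by
        refine Finset.sum_congr rfl fun m _ => ?_
        by_cases hd : i ∣ m
        · rw [if_pos hd]
          refine Finset.sum_congr rfl fun n _ => ?_
          rw [Nat.mul_div_cancel' hd, hl'def]
          simp only [if_pos hd]
        · rw [if_neg hd]
          refine Finset.sum_eq_zero fun n _ => ?_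
          simp [hl'def, hd]
    _ = ∑ a ∈ Finset.range (k + 1), ∑ n ∈ Finset.range (i * k + 1),
          (γ (i * a + n) : ℂ) * l a * (starRingEnd ℂ) (l' n) :=
        sum_dilate hipos k (fun a => ∑ n ∈ Finset.range (i * k + 1),
          (γ (i * a + n) : ℂ) * l a * (starRingEnd ℂ) (l' n))
    _ = ∑ a ∈ Finset.range (k + 1), ∑ b ∈ Finset.range (k + 1),
          (γ (i * (a + b)) : ℂ) * l a * (starRingEnd ℂ) (l b) := by
        refine Finset.sum_congr rfl fun a _ => ?_
        rw [← sum_dilate hipos k (fun b => (γ (i * (a + b)) : ℂ) * l a * (starRingEnd ℂ) (l b))]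
        refine Finset.sum_congr rfl fun n _ => ?_
        by_cases hd : i ∣ n
        · rw [if_pos hd, hl'def]
          simp only [if_pos hd]
          congr 2
          rw [Nat.mul_add, Nat.mul_div_cancel' hd]
        · rw [if_neg hd, hl'def]
          simp [hd]
    _ = ∑ a ∈ Finset.range (k + 1), ∑ b ∈ Finset.range (k + 1),
          ((‖((T ^ i) ^ (a + b)) h‖ ^ 2 : ℝ) : ℂ) * l a * (starRingEnd ℂ) (l b) := by
        refine Finset.sum_congr rfl fun a _ => Finset.sum_congr rfl fun b _ => ?_
        rw [hγ]
        simp only [pow_mul]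

end
end

section
/- Let H be a complex Hilbert space and T ∈ B(H). The following are equivalent: (i) T is a 2-isometry (B₂(T) = 0); (ii) T is completely hyperexpansive (B_m(T) ≤ 0 for all m ∈ ℕ) and CPD; (iii) T is 2-hyperexpansive (B₂(T) ≤ 0) and CPD. -/
open MeasureTheory Filter Topology ContinuousLinearMap
open scoped ComplexOrder

noncomputable section

/-!
Write `γₕ(n) = ‖Tⁿh‖²`. Expanding the inner product gives `⟪B_m(T) h, h⟫ = (-1)ᵐ Δᵐγₕ(0)`, and
replacing `h` by `Tⁿh` shifts `γₕ` by `n`; so `T` is a 2-isometry exactly when `Δ²γₕ = 0` for all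
`h`, i.e. every `γₕ` is affine. An affine sequence is CPD, all its differences of order `≥ 2`
vanish, and its slope `-⟪B₁(T) h, h⟫` is nonnegative because `γₕ ≥ 0`: this is (i) ⇒ (ii).
Conversely, testing the CPD condition on `λ = (1, -1)` gives `Δ²γₕ(0) ≥ 0`, i.e. `B₂(T) ≥ 0`,
which together with `B₂(T) ≤ 0` forces `B₂(T) = 0`.
-/

open fwdDiff
open scoped InnerProductSpace

lemma fwdDiff_iter_two_apply {G : Type*} [AddCommGroup G] (f : ℕ → G) (n : ℕ) :
    (Δ_[1])^[2] f n = f (n + 2) - 2 • f (n + 1) + f n := by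
  simp only [Function.iterate_succ, Function.iterate_zero, Function.id_comp,
    Function.comp_apply, fwdDiff]
  abel

lemma fwdDiff_iter_eq_zero_of_two_le {M G : Type*} [AddCommMonoid M] [AddCommGroup G]
    {a : M} {f : M → G} (h : (Δ_[a])^[2] f = 0) {m : ℕ} (hm : 2 ≤ m) : (Δ_[a])^[m] f = 0 := by
  obtain ⟨k, rfl⟩ := Nat.exists_eq_add_of_le' hm
  rw [Function.iterate_add_apply, h]
  exact Function.iterate_fixed (fwdDiff_const a 0) k

section Sequence

variable {γ : ℕ → ℝ}

lemma IsCPDSeq.fwdDiff_iter_two_nonneg (hγ : IsCPDSeq γ) : 0 ≤ (Δ_[1])^[2] γ 0 := by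
  have h := hγ 1 (fun i => (-1) ^ i) (by norm_num [Finset.sum_range_succ])
  refine Complex.zero_le_real.mp (h.trans_eq ?_)
  simp only [Finset.sum_range_succ, Finset.sum_range_zero, map_pow, map_neg, map_one,
    fwdDiff_iter_two_apply, two_nsmul]
  push_cast
  ring

lemma isCPDSeq_affine (a b : ℝ) : IsCPDSeq fun n => a + n * b := by
  intro k l hl
  have hconj : ∑ j ∈ Finset.range (k + 1), starRingEnd ℂ (l j) = 0 := by
    rw [← map_sum, hl, map_zero]
  -- the kernel `a + (i + j) b` splits as `u i + u j`, and both parts are killed by `∑ λ = 0`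
  have hsplit : ∀ i j : ℕ, (((a + ((i + j : ℕ) : ℝ) * b : ℝ)) : ℂ) * l i * starRingEnd ℂ (l j) =
      ((a + i * b) * l i) * starRingEnd ℂ (l j) + l i * (j * b * starRingEnd ℂ (l j)) := by
    intro i j
    push_cast
    ring
  simp only [hsplit, Finset.sum_add_distrib, ← Finset.mul_sum, ← Finset.sum_mul, hconj, hl]
  simp

lemma fwdDiff_eq_of_fwdDiff_iter_two_eq_zero (h : (Δ_[1])^[2] γ = 0) (n : ℕ) :
    Δ_[1] γ n = Δ_[1] γ 0 := by
  induction n with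
  | zero => rfl
  | succ n ih =>
    have := fwdDiff_iter_two_apply γ n
    simp only [h, Pi.zero_apply, fwdDiff, zero_add, two_nsmul] at this ih ⊢
    linarith

lemma eq_add_mul_of_fwdDiff_iter_two_eq_zero (h : (Δ_[1])^[2] γ = 0) (n : ℕ) :
    γ n = γ 0 + n * Δ_[1] γ 0 := by
  induction n with
  | zero => simp
  | succ n ih =>
    have := fwdDiff_eq_of_fwdDiff_iter_two_eq_zero h n
    simp only [fwdDiff, zero_add] at this ih ⊢
    push_cast
    linarith

lemma fwdDiff_nonneg_of_fwdDiff_iter_two_eq_zero (h : (Δ_[1])^[2] γ = 0) (hγ : ∀ n, 0 ≤ γ n) :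
    0 ≤ Δ_[1] γ 0 := by
  by_contra! hneg
  obtain ⟨n, hn⟩ := exists_nat_gt (γ 0 / -Δ_[1] γ 0)
  rw [div_lt_iff₀ (neg_pos.mpr hneg)] at hn
  have := hγ n
  rw [eq_add_mul_of_fwdDiff_iter_two_eq_zero h n] at this
  linarith

end Sequence

section Operator

variable {H : Type*} [NormedAddCommGroup H] [InnerProductSpace ℂ H]

def orbitNormSq (T : H →L[ℂ] H) (h : H) (n : ℕ) : ℝ := ‖(T ^ n) h‖ ^ 2

lemma orbitNormSq_pow_apply (T : H →L[ℂ] H) (h : H) (k n : ℕ) :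
    orbitNormSq T ((T ^ k) h) n = orbitNormSq T h (n + k) := by
  rw [orbitNormSq, orbitNormSq, pow_add]
  rfl

lemma fwdDiff_iter_orbitNormSq_pow_apply (T : H →L[ℂ] H) (h : H) (m k : ℕ) :
    (Δ_[1])^[m] (orbitNormSq T ((T ^ k) h)) 0 = (Δ_[1])^[m] (orbitNormSq T h) k := by
  rw [funext (orbitNormSq_pow_apply T h k), fwdDiff_iter_comp_add, zero_add]

variable [CompleteSpace H]

lemma inner_bOp_apply_self (T : H →L[ℂ] H) (m : ℕ) (h : H) :
    ⟪bOp T m h, h⟫_ℂ = ((-1) ^ m * (Δ_[1])^[m] (orbitNormSq T h) 0 : ℝ) := by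
  simp only [bOp, sum_apply, smul_apply, mul_apply_eq_comp, sum_inner, inner_smul_left]
  rw [fwdDiff_iter_eq_sum_shift, Finset.mul_sum]
  push_cast
  refine Finset.sum_congr rfl fun k hk => ?_
  obtain ⟨j, rfl⟩ := Nat.exists_eq_add_of_le (Finset.mem_range_succ_iff.mp hk)
  have hsign : (-1 : ℂ) ^ (k + j) * (-1) ^ (k + j - k) = (-1) ^ k := by
    rw [pow_add, Nat.add_sub_cancel_left, mul_assoc, ← mul_pow]
    norm_num
  rw [adjoint_inner_left, orbitNormSq, ← pow_apply_eq_iterate, inner_self_eq_norm_sq_to_K,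
    zsmul_eq_mul]
  push_cast
  rw [← mul_assoc, ← mul_assoc, hsign]
  simp

lemma fwdDiff_iter_two_orbitNormSq_eq_zero {T : H →L[ℂ] H} (hB : bOp T 2 = 0) (h : H) :
    (Δ_[1])^[2] (orbitNormSq T h) = 0 := by
  funext k
  have hk := inner_bOp_apply_self T 2 ((T ^ k) h)
  rw [hB, zero_apply, inner_zero_left, fwdDiff_iter_orbitNormSq_pow_apply] at hk
  simpa using hk.symm

lemma isPositive_neg_bOp_of_bOp_two_eq_zero {T : H →L[ℂ] H} (hB : bOp T 2 = 0) {m : ℕ}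
    (hm : 1 ≤ m) : (-(bOp T m)).IsPositive := by
  rw [isPositive_iff_complex]
  intro h
  rw [neg_apply, inner_neg_left, inner_bOp_apply_self, ← Complex.ofReal_neg,
    RCLike.re_to_complex, Complex.ofReal_re]
  refine ⟨rfl, ?_⟩
  have hΔ := fwdDiff_iter_two_orbitNormSq_eq_zero hB h
  rcases hm.eq_or_lt with rfl | hm
  · simpa using fwdDiff_nonneg_of_fwdDiff_iter_two_eq_zero hΔ fun n => by
      unfold orbitNormSq; positivity
  · simp [fwdDiff_iter_eq_zero_of_two_le hΔ hm]

lemma isCPDOp_of_bOp_two_eq_zero {T : H →L[ℂ] H} (hB : bOp T 2 = 0) : IsCPDOp T := by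
  intro h
  have haffine :=
    eq_add_mul_of_fwdDiff_iter_two_eq_zero (fwdDiff_iter_two_orbitNormSq_eq_zero hB h)
  change IsCPDSeq (orbitNormSq T h)
  rw [funext haffine]
  exact isCPDSeq_affine _ _

lemma bOp_two_eq_zero_of_isCPDOp {T : H →L[ℂ] H} (h2 : (-(bOp T 2)).IsPositive)
    (hc : IsCPDOp T) : bOp T 2 = 0 := by
  refine le_antisymm (by rwa [ContinuousLinearMap.le_def, zero_sub]) ?_
  rw [nonneg_iff_isPositive, isPositive_iff_complex]
  intro h
  rw [inner_bOp_apply_self, RCLike.re_to_complex, Complex.ofReal_re]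
  have hcpd : IsCPDSeq (orbitNormSq T h) := hc h
  exact ⟨rfl, by simpa using hcpd.fwdDiff_iter_two_nonneg⟩

end Operator

/-- Proposition `cpd-ch`: for `T ∈ B(H)` the following are equivalent: (i) `T` is a 2-isometry
(`B₂(T) = 0`); (ii) `T` is completely hyperexpansive (`B_m(T) ≤ 0` for all `m ∈ ℕ`) and CPD;
(iii) `T` is 2-hyperexpansive (`B₂(T) ≤ 0`) and CPD. -/
theorem two_isometry_iff_hyperexpansive_cpd {H : Type*} [NormedAddCommGroup H]
    [InnerProductSpace ℂ H] [CompleteSpace H] (T : H →L[ℂ] H) :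
    (bOp T 2 = 0 ↔ ((∀ m : ℕ, 1 ≤ m → (-(bOp T m)).IsPositive) ∧ IsCPDOp T)) ∧
    (((∀ m : ℕ, 1 ≤ m → (-(bOp T m)).IsPositive) ∧ IsCPDOp T) ↔
      ((-(bOp T 2)).IsPositive ∧ IsCPDOp T)) := by
  have ii_of_i : bOp T 2 = 0 → (∀ m : ℕ, 1 ≤ m → (-(bOp T m)).IsPositive) ∧ IsCPDOp T :=
    fun hB => ⟨fun _ => isPositive_neg_bOp_of_bOp_two_eq_zero hB, isCPDOp_of_bOp_two_eq_zero hB⟩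
  have iii_of_ii : (∀ m : ℕ, 1 ≤ m → (-(bOp T m)).IsPositive) ∧ IsCPDOp T →
      (-(bOp T 2)).IsPositive ∧ IsCPDOp T :=
    fun ⟨hneg, hc⟩ => ⟨hneg 2 one_le_two, hc⟩
  have i_of_iii : (-(bOp T 2)).IsPositive ∧ IsCPDOp T → bOp T 2 = 0 :=
    fun ⟨h2, hc⟩ => bOp_two_eq_zero_of_isCPDOp h2 hc
  exact ⟨⟨ii_of_i, i_of_iii ∘ iii_of_ii⟩, ⟨iii_of_ii, ii_of_i ∘ i_of_iii⟩⟩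

end
end
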